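/- arXiv:1507.07066 — 6 statements merged into one kernel-verified Lean document; each statement's English description precedes it below -/
import Mathlib

section
/- For an integer k ≥ 1, if a (finite simple) graph G has a {P₂,P_{2k+1}}-factor, then for every subset X of the vertex set of G one has Σ_{0 ≤ i ≤ k−1} (k−i)·c_{2i+1}(G−X) ≤ (k+1)·|X|. -/
open SimpleGraph Finset

/-- `G.HasPathFactor ns` means that `G` has a spanning subgraph `F` each of whose
connected components is (isomorphic to) a path on `n` vertices for some `n ∈ ns`. -/
def SimpleGraph.HasPathFactor {V : Type*} (G : SimpleGraph V) (ns : Set ℕ) : Prop :=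
  ∃ F : SimpleGraph V, F ≤ G ∧ ∀ C : F.ConnectedComponent,
    ∃ n ∈ ns, Nonempty (F.induce C.supp ≃g SimpleGraph.pathGraph n)

/-- `cCount G X i` is the number of connected components of `G − X` with exactly `i` vertices. -/
noncomputable def cCount {V : Type*} (G : SimpleGraph V) (X : Set V) (i : ℕ) : ℕ :=
  Nat.card {C : (G.induce Xᶜ).ConnectedComponent // Nat.card C.supp = i}

section Core
variable {κ : Type*} [DecidableEq κ]

lemma core_lemma (k n : ℕ) (hk : 1 ≤ k) (hn : n = 2 ∨ n = 2 * k + 1)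
    (q : Fin n → Option κ)
    (hcons : ∀ (a b : Fin n), (a : ℕ) + 1 = (b : ℕ) → ∀ c c', q a = some c → q b = some c' → c = c')
    (T : Finset κ) (w : κ → ℕ)
    (hodd : ∀ c ∈ T, Odd (univ.filter (fun j => q j = some c)).card)
    (hw : ∀ c ∈ T, 2 * w c + (univ.filter (fun j => q j = some c)).card ≤ 2 * k + 1) :
    ∑ c ∈ T, 2 * w c ≤ (2 * k + 2) * (univ.filter (fun j => q j = none)).card := by
  classical
  set x := (univ.filter (fun j => q j = none)).card with hx
  set m : Option κ → ℕ := fun o => (univ.filter (fun j => q j = o)).card with hm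
  set P : Finset (Option κ) := ((univ : Finset (Fin n)).image q).erase none with hP
  have hn2 : n ≤ 2 * k + 1 := by omega
  -- presence of charged components
  have hTP : ∀ c ∈ T, some c ∈ P := by
    intro c hc
    have h1 : 0 < m (some c) := (hodd c hc).pos
    rw [hm] at h1
    obtain ⟨j, hj⟩ := Finset.card_pos.mp h1
    simp only [mem_filter] at hj
    refine Finset.mem_erase.mpr ⟨by simp, Finset.mem_image.mpr ⟨j, mem_univ j, hj.2⟩⟩
  -- (ii): ∑_{o∈P} m o + x = n
  have himg : (univ : Finset (Fin n)).card = ∑ o ∈ (univ : Finset (Fin n)).image q, m o :=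
    Finset.card_eq_sum_card_fiberwise (fun j _ => Finset.mem_image_of_mem q (mem_univ j))
  have hsub : (univ : Finset (Fin n)).image q ⊆ insert none P := by
    intro o ho
    rcases eq_or_ne o none with rfl | hne
    · exact mem_insert_self _ _
    · exact mem_insert_of_mem (Finset.mem_erase.mpr ⟨hne, ho⟩)
  have hzero : ∀ o ∈ insert none P, o ∉ (univ : Finset (Fin n)).image q → m o = 0 := by
    intro o _ ho
    rw [hm]
    simp only [Finset.card_eq_zero, Finset.filter_eq_empty_iff]
    intro j _
    exact fun hj => ho (Finset.mem_image.mpr ⟨j, mem_univ j, hj⟩)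
  have hnsum : ∑ o ∈ insert none P, m o = n := by
    rw [← Finset.sum_subset hsub hzero, ← himg, Finset.card_univ, Fintype.card_fin]
  have hPnone : none ∉ P := fun hc => (Finset.mem_erase.mp hc).1 rfl
  have hii : ∑ o ∈ P, m o + x = n := by
    rw [Finset.sum_insert hPnone] at hnsum
    have hmn : m none = x := rfl
    omega
  have hmlen : ∀ o, m o ≤ n := by
    intro o
    rw [hm]
    simpa using Finset.card_filter_le univ (fun j => q j = o)
  -- (iii): ∑_T 2w + ∑_P m ≤ |P| * (2k+1)
  set W : Option κ → ℕ := fun o => o.elim 0 (fun c => if c ∈ T then 2 * w c else 0) with hWdef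
  have hTsub : T.image some ⊆ P := Finset.image_subset_iff.mpr (fun c hc => hTP c hc)
  have hWsum : ∑ o ∈ P, W o = ∑ c ∈ T, 2 * w c := by
    rw [← Finset.sum_subset hTsub (by
      intro o _ ho
      match o with
      | none => rfl
      | some c =>
        have hc : c ∉ T := fun hc => ho (Finset.mem_image_of_mem _ hc)
        simp [hWdef, hc]),
      Finset.sum_image (fun a _ b _ h => Option.some_injective κ h)]
    exact Finset.sum_congr rfl (fun c hc => by simp [hWdef, hc])
  have hiii : ∑ c ∈ T, 2 * w c + ∑ o ∈ P, m o ≤ P.card * (2 * k + 1) := by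
    rw [← hWsum, ← Finset.sum_add_distrib]
    calc ∑ o ∈ P, (W o + m o) ≤ ∑ _o ∈ P, (2 * k + 1) := by
          refine Finset.sum_le_sum (fun o ho => ?_)
          match o with
          | none => exact absurd ho hPnone
          | some c =>
            by_cases hc : c ∈ T
            · have := hw c hc
              simp only [hWdef, Option.elim, if_pos hc]
              exact this
            · simp only [hWdef, Option.elim, if_neg hc, zero_add]
              exact le_trans (hmlen _) hn2
      _ = P.card * (2 * k + 1) := by rw [Finset.sum_const, smul_eq_mul]
  -- (iv): |P| ≤ x + 1
  have npos : 0 < n := by omega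
  have hiv : P.card ≤ x + 1 := by
    set f : Option κ → Fin n := fun o =>
      if h : (univ.filter (fun j => q j = o)).Nonempty
      then (univ.filter (fun j => q j = o)).min' h else ⟨0, npos⟩ with hf
    have hfP : ∀ o ∈ P, q (f o) = o ∧ ∀ j ∈ univ.filter (fun j => q j = o), f o ≤ j := by
      intro o ho
      have hne : (univ.filter (fun j => q j = o)).Nonempty := by
        obtain ⟨j, hj⟩ := Finset.mem_image.mp (Finset.mem_erase.mp ho).2
        exact ⟨j, Finset.mem_filter.mpr ⟨mem_univ j, hj.2⟩⟩
      rw [hf]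
      simp only [dif_pos hne]
      exact ⟨(Finset.mem_filter.mp ((univ.filter (fun j => q j = o)).min'_mem hne)).2,
        fun j hj => Finset.min'_le _ j hj⟩
    set B : Finset (Fin n) := insert (⟨0, npos⟩ : Fin n)
      ((univ.filter (fun j => q j = none)).image
        (fun (j : Fin n) => if h : (j : ℕ) + 1 < n then (⟨(j : ℕ) + 1, h⟩ : Fin n) else j)) with hB
    have hmaps : ∀ o ∈ P, f o ∈ B := by
      intro o ho
      obtain ⟨hq, hmin⟩ := hfP o ho
      by_cases h0 : ((f o : Fin n) : ℕ) = 0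
      · have : f o = ⟨0, npos⟩ := Fin.ext h0
        rw [hB, this]
        exact mem_insert_self _ _
      · have hlt : ((f o : Fin n) : ℕ) - 1 < n := by omega
        set j' : Fin n := ⟨((f o : Fin n) : ℕ) - 1, hlt⟩ with hj'
        have hsucc : (j' : ℕ) + 1 = ((f o : Fin n) : ℕ) := by
          simp only [hj']; omega
        have hqj' : q j' = none := by
          rcases ho' : q j' with _ | c'
          · rfl
          · exfalso
            obtain ⟨c, hoc⟩ : ∃ c, o = some c :=
              Option.ne_none_iff_exists'.mp (Finset.mem_erase.mp ho).1
            have hqc : q (f o) = some c := by rw [hq, hoc]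
            have hcc := hcons j' (f o) hsucc c' c ho' hqc
            have hj'mem : j' ∈ univ.filter (fun j => q j = o) := by
              rw [Finset.mem_filter, hoc]
              exact ⟨mem_univ _, by rw [ho', hcc]⟩
            have hle : f o ≤ j' := hmin j' hj'mem
            have : ((f o : Fin n) : ℕ) ≤ (j' : ℕ) := hle
            omega
        rw [hB]
        refine mem_insert_of_mem (Finset.mem_image.mpr ⟨j', Finset.mem_filter.mpr ⟨mem_univ _, hqj'⟩, ?_⟩)
        have hlt2 : (j' : ℕ) + 1 < n := by rw [hsucc]; exact (f o).isLt
        rw [dif_pos hlt2]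
        exact Fin.ext hsucc
    have hinj : Set.InjOn f P := by
      intro o1 h1 o2 h2 he
      have := (hfP o1 h1).1
      rw [he, (hfP o2 h2).1] at this
      exact this.symm
    calc P.card ≤ B.card := Finset.card_le_card_of_injOn f hmaps hinj
      _ ≤ x + 1 := by
          rw [hB]
          exact le_trans (Finset.card_insert_le _ _)
            (Nat.add_le_add_right Finset.card_image_le 1)
  -- conclude
  rcases hn with rfl | rfl
  · -- n = 2
    by_cases hx0 : x = 0
    · -- T is empty
      have hqsome : ∀ j : Fin 2, q j ≠ none := by
        intro j hj
        have hmem : j ∈ univ.filter (fun j => q j = none) := Finset.mem_filter.mpr ⟨mem_univ _, hj⟩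
        have := Finset.card_pos.mpr ⟨j, hmem⟩
        omega
      obtain ⟨c0, hc0⟩ : ∃ c0, q 0 = some c0 := Option.ne_none_iff_exists'.mp (hqsome 0)
      obtain ⟨c1, hc1⟩ : ∃ c1, q 1 = some c1 := Option.ne_none_iff_exists'.mp (hqsome 1)
      have hcc : c0 = c1 := hcons 0 1 (by decide) c0 c1 hc0 hc1
      have hT : T = ∅ := by
        rw [Finset.eq_empty_iff_forall_notMem]
        intro c hc
        have hoddc := hodd c hc
        have hcard : (univ.filter (fun j => q j = some c)).card = if c = c0 then 2 else 0 := by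
          split_ifs with hcase
        
          · subst hcase
            rw [Finset.filter_true_of_mem, Finset.card_univ, Fintype.card_fin]
            intro j _
            fin_cases j
            · exact hc0
            · show q 1 = some c
              rw [hc1, hcc]
          · rw [Finset.card_eq_zero, Finset.filter_eq_empty_iff]
            intro j _
            fin_cases j
            · show ¬ q 0 = some c
              rw [hc0]
              exact fun hcon => hcase (Option.some_injective _ hcon).symm
            · show ¬ q 1 = some c
              rw [hc1]
              exact fun hcon => hcase ((Option.some_injective _ hcon).symm.trans hcc.symm)
        rw [hcard] at hoddc
        split_ifs at hoddc with hcase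
        · exact (Nat.not_odd_iff_even.mpr (by decide)) hoddc
        · exact (Nat.not_odd_iff_even.mpr (by decide)) hoddc
      rw [hT]
      simp
    · have hcard : P.card + x ≤ 2 := by
        have : P.card ≤ ∑ o ∈ P, m o := by
          refine le_trans ?_ (Finset.card_nsmul_le_sum P m 1 ?_)
          · simp
          · intro o ho
            rcases o with _ | c
            · exact absurd ho hPnone
            · obtain ⟨j, hj⟩ := Finset.mem_image.mp (Finset.mem_erase.mp ho).2
              have hjm : j ∈ univ.filter (fun j => q j = some c) := Finset.mem_filter.mpr ⟨mem_univ j, hj.2⟩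
              exact Finset.card_pos.mpr ⟨j, hjm⟩
        omega
      have h1 : ∑ c ∈ T, 2 * w c ≤ P.card * (2 * k + 1) := by omega
      have hP1 : P.card ≤ 1 := by omega
      have hx1 : 1 ≤ x := by omega
      calc ∑ c ∈ T, 2 * w c ≤ P.card * (2 * k + 1) := h1
        _ ≤ 1 * (2 * k + 1) := Nat.mul_le_mul_right _ hP1
        _ ≤ (2 * k + 2) * x := by nlinarith
  · -- n = 2k+1
    have : ∑ c ∈ T, 2 * w c + (2 * k + 1) ≤ (x + 1) * (2 * k + 1) + x := by
      calc ∑ c ∈ T, 2 * w c + (2 * k + 1) = ∑ c ∈ T, 2 * w c + (∑ o ∈ P, m o + x) := by rw [hii]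
        _ ≤ P.card * (2 * k + 1) + x := by omega
        _ ≤ (x + 1) * (2 * k + 1) + x := by
            exact Nat.add_le_add_right (Nat.mul_le_mul_right _ hiv) x
    nlinarith

end Core

/-- Proposition 2.1: if a graph `G` has a `{P₂, P_{2k+1}}`-factor (`k ≥ 1`), then
`∑_{0 ≤ i ≤ k−1} (k−i)·c_{2i+1}(G−X) ≤ (k+1)·|X|` for all `X ⊆ V(G)`. -/
theorem necessary_condition_of_hasPathFactor {V : Type*} [Fintype V] (k : ℕ) (hk : 1 ≤ k)
    (G : SimpleGraph V) (h : G.HasPathFactor {2, 2 * k + 1}) :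
    ∀ X : Set V,
      ∑ i ∈ Finset.range k, (k - i) * cCount G X (2 * i + 1) ≤ (k + 1) * X.ncard := by
  classical
  intro X
  rcases isEmpty_or_nonempty V with hV | hV
  · have hzero : ∀ i, cCount G X (2 * i + 1) = 0 := by
      intro i
      have hE : IsEmpty ((G.induce Xᶜ).ConnectedComponent) := by
        constructor
        intro C
        refine C.ind (fun v => ?_)
        exact (IsEmpty.false (v : V)).elim
      rw [cCount]
      exact Nat.card_of_isEmpty
    simp [hzero]
  obtain ⟨F, hFG, hcomp⟩ := h
  set G' := G.induce Xᶜ with hG'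
  have finκ : Fintype G'.ConnectedComponent := Fintype.ofFinite _
  have finD : Fintype F.ConnectedComponent := Fintype.ofFinite _
  choose nD hnD hiso using hcomp
  have e : ∀ D : F.ConnectedComponent, F.induce D.supp ≃g pathGraph (nD D) :=
    fun D => (hiso D).some
  set p : ∀ D : F.ConnectedComponent, Fin (nD D) → V :=
    fun D j => ((e D).symm j : D.supp) with hp
  -- basic facts about p
  have hpD : ∀ D j, F.connectedComponentMk (p D j) = D := fun D j => ((e D).symm j).2
  have hpinj : ∀ D, Function.Injective (p D) := by
    intro D
    exact Subtype.val_injective.comp (e D).symm.toEquiv.injective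
  have hpsurj : ∀ D v, F.connectedComponentMk v = D → ∃ j, p D j = v := by
    intro D v hv
    exact ⟨e D ⟨v, hv⟩, by simp [hp]⟩
  have hadj : ∀ D (a b : Fin (nD D)), (a : ℕ) + 1 = (b : ℕ) → G.Adj (p D a) (p D b) := by
    intro D a b hab
    have h1 : (pathGraph (nD D)).Adj a b := pathGraph_adj.mpr (Or.inl hab)
    have h2 : (F.induce D.supp).Adj ((e D).symm a) ((e D).symm b) :=
      (e D).symm.map_adj_iff.mpr h1
    have h3 : F.Adj (p D a) (p D b) := by
      simpa [SimpleGraph.induce, hp] using h2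
    exact hFG h3
  -- the labelling function
  set q : ∀ D : F.ConnectedComponent, Fin (nD D) → Option G'.ConnectedComponent :=
    fun D j => if hj : (p D j) ∈ Xᶜ then some (G'.connectedComponentMk ⟨p D j, hj⟩) else none
    with hq
  have hcons : ∀ D (a b : Fin (nD D)), (a : ℕ) + 1 = (b : ℕ) →
      ∀ c c', q D a = some c → q D b = some c' → c = c' := by
    intro D a b hab c c' ha hb
    by_cases h1 : p D a ∈ Xᶜ
    · by_cases h2 : p D b ∈ Xᶜ
      · rw [hq] at ha hb
        simp only [dif_pos h1] at ha
        simp only [dif_pos h2] at hb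
        have hGadj := hadj D a b hab
        have hadj' : G'.Adj ⟨p D a, h1⟩ ⟨p D b, h2⟩ := by
          simp only [hG', SimpleGraph.induce, comap_adj, Function.Embedding.coe_subtype]
          exact hGadj
        have := SimpleGraph.ConnectedComponent.sound hadj'.reachable
        rw [← Option.some_injective _ ha, ← Option.some_injective _ hb]
        exact this
      · rw [hq] at hb
        simp only [dif_neg h2] at hb
        exact absurd hb.symm (Option.some_ne_none c')
    · rw [hq] at ha
      simp only [dif_neg h1] at ha
      exact absurd ha.symm (Option.some_ne_none c)
  -- counting: vertices of a path component inside a finite set of vertices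
  have hcount : ∀ (D : F.ConnectedComponent) (S : Finset V),
      (univ.filter (fun j => p D j ∈ S)).card
        = (S.filter (fun v => F.connectedComponentMk v = D)).card := by
    intro D S
    refine Finset.card_bij (fun j _ => p D j) ?_ ?_ ?_
    · intro j hj
      exact Finset.mem_filter.mpr ⟨(Finset.mem_filter.mp hj).2, hpD D j⟩
    · intro a _ b _ hab
      exact hpinj D hab
    · intro v hv
      obtain ⟨hvS, hvD⟩ := Finset.mem_filter.mp hv
      obtain ⟨j, hj⟩ := hpsurj D v hvD
      exact ⟨j, Finset.mem_filter.mpr ⟨mem_univ j, by rw [hj]; exact hvS⟩, hj⟩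
  -- x and m counts
  set xD : F.ConnectedComponent → ℕ :=
    fun D => (univ.filter (fun j => q D j = none)).card with hxD
  set SC : G'.ConnectedComponent → Finset V :=
    fun C => (Set.toFinite {v : V | ∃ hv : v ∈ Xᶜ, G'.connectedComponentMk ⟨v, hv⟩ = C}).toFinset
    with hSC
  set mD : F.ConnectedComponent → G'.ConnectedComponent → ℕ :=
    fun D C => (univ.filter (fun j => q D j = some C)).card with hmD
  have hq_none : ∀ D j, q D j = none ↔ p D j ∈ X.toFinset := by
    intro D j
    rw [hq, Set.mem_toFinset]
    by_cases hj : p D j ∈ Xᶜ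
    · simp only [dif_pos hj]
      exact ⟨fun hc => absurd hc (by simp), fun hc => absurd hc hj⟩
    · simp only [dif_neg hj]
      simpa using hj
  have hq_some : ∀ D j C, q D j = some C ↔ p D j ∈ SC C := by
    intro D j C
    rw [hq, hSC, Set.Finite.mem_toFinset, Set.mem_setOf_eq]
    by_cases hj : p D j ∈ Xᶜ
    · simp only [dif_pos hj]
      constructor
      · intro hc
        exact ⟨hj, Option.some_injective _ hc⟩
      · rintro ⟨hv, hc⟩
        rw [hc]
    · simp only [dif_neg hj]
      constructor
      · intro hc; exact absurd hc (by simp)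
      · rintro ⟨hv, _⟩; exact absurd hv hj
  have hx_eq : ∀ D, xD D = (X.toFinset.filter (fun v => F.connectedComponentMk v = D)).card := by
    intro D
    calc xD D = (univ.filter (fun j => p D j ∈ X.toFinset)).card := by
          rw [hxD]
          exact congrArg Finset.card (Finset.filter_congr (fun j _ => hq_none D j))
      _ = _ := hcount D X.toFinset
  have hm_eq : ∀ D C, mD D C = ((SC C).filter (fun v => F.connectedComponentMk v = D)).card := by
    intro D C
    calc mD D C = (univ.filter (fun j => p D j ∈ SC C)).card := by
          rw [hmD]
          exact congrArg Finset.card (Finset.filter_congr (fun j _ => hq_some D j C))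
      _ = _ := hcount D (SC C)
  have hsumx : ∑ D, xD D = X.toFinset.card := by
    rw [Finset.card_eq_sum_card_fiberwise
      (f := fun v => F.connectedComponentMk v) (t := univ) (fun v _ => mem_univ _)]
    exact Finset.sum_congr rfl (fun D _ => hx_eq D)
  have hSCcard : ∀ C, (SC C).card = Nat.card C.supp := by
    intro C
    have himg : {v : V | ∃ hv : v ∈ Xᶜ, G'.connectedComponentMk ⟨v, hv⟩ = C}
        = Subtype.val '' (C.supp : Set ↥(Xᶜ)) := by
      ext v
      simp only [Set.mem_setOf_eq, Set.mem_image]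
      constructor
      · rintro ⟨hv, hc⟩
        exact ⟨⟨v, hv⟩, hc, rfl⟩
      · rintro ⟨⟨u, hu⟩, hc, rfl⟩
        exact ⟨hu, hc⟩
    rw [hSC, ← Set.ncard_eq_toFinset_card _ _, himg,
      Set.ncard_image_of_injective _ Subtype.val_injective, ← Nat.card_coe_set_eq]
  have hsumm : ∀ C, ∑ D, mD D C = Nat.card C.supp := by
    intro C
    rw [← hSCcard C, Finset.card_eq_sum_card_fiberwise
      (f := fun v => F.connectedComponentMk v) (t := univ) (fun v _ => mem_univ _)]
    exact Finset.sum_congr rfl (fun D _ => hm_eq D C)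
  have hmle : ∀ D C, mD D C ≤ Nat.card C.supp := by
    intro D C
    rw [hm_eq D C, ← hSCcard C]
    exact Finset.card_filter_le _ _
  -- the weights and the small components
  set w : G'.ConnectedComponent → ℕ := fun C => (2 * k + 1 - Nat.card C.supp) / 2 with hw
  set Small : Finset G'.ConnectedComponent :=
    univ.filter (fun C => ∃ i, i < k ∧ Nat.card C.supp = 2 * i + 1) with hSmall
  -- rewriting the LHS
  have hcC : ∀ i, cCount G X (2 * i + 1)
      = (univ.filter (fun C : G'.ConnectedComponent => Nat.card C.supp = 2 * i + 1)).card := by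
    intro i
    rw [cCount, Nat.card_eq_fintype_card, Fintype.card_subtype]
  have hLHS : ∑ i ∈ Finset.range k, (k - i) * cCount G X (2 * i + 1) = ∑ C ∈ Small, w C := by
    have hunion : Small = (Finset.range k).biUnion
        (fun i => univ.filter (fun C => Nat.card C.supp = 2 * i + 1)) := by
      ext C
      simp only [hSmall, Finset.mem_filter, mem_univ, true_and, Finset.mem_biUnion,
        Finset.mem_range]
    rw [hunion, Finset.sum_biUnion]
    · refine Finset.sum_congr rfl (fun i hi => ?_)
      rw [Finset.mem_range] at hi
      rw [hcC i]
      rw [Finset.sum_congr rfl (fun C hC => show w C = k - i by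
        simp only [hw]
        have := (Finset.mem_filter.mp hC).2
        omega)]
      rw [Finset.sum_const, smul_eq_mul, mul_comm]
    · intro i hi j hj hij
      simp only [Finset.disjoint_left, Finset.mem_filter]
      rintro C ⟨_, hCi⟩ ⟨_, hCj⟩
      apply hij
      omega
  -- choose for each small component a path with odd intersection
  have hodd_ex : ∀ C ∈ Small, ∃ D, Odd (mD D C) := by
    intro C hC
    obtain ⟨i, hik, hsize⟩ := (Finset.mem_filter.mp hC).2
    have hodds : Odd (∑ D, mD D C) := by
      rw [hsumm C, hsize]
      exact ⟨i, by omega⟩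
    by_contra hno
    push_neg at hno
    have : Even (∑ D, mD D C) :=
      Finset.even_sum _ (fun D _ => Nat.not_odd_iff_even.mp (hno D))
    exact (Nat.not_odd_iff_even.mpr this) hodds
  have hNE : Nonempty F.ConnectedComponent := ⟨F.connectedComponentMk (Classical.arbitrary V)⟩
  set Dof : G'.ConnectedComponent → F.ConnectedComponent :=
    fun C => if hc : ∃ D, Odd (mD D C) then hc.choose else Classical.arbitrary _ with hDofdef
  have hDof : ∀ C ∈ Small, Odd (mD (Dof C) C) := by
    intro C hC
    rw [hDofdef]
    simp only [dif_pos (hodd_ex C hC)]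
    exact (hodd_ex C hC).choose_spec
  -- per-path inequality
  have key : ∀ D : F.ConnectedComponent,
      ∑ C ∈ Small.filter (fun C => Dof C = D), 2 * w C ≤ (2 * k + 2) * xD D := by
    intro D
    refine core_lemma k (nD D) hk ?_ (q D) (hcons D) _ w ?_ ?_
    · have := hnD D
      simp only [Set.mem_insert_iff, Set.mem_singleton_iff] at this
      exact this
    · intro C hC
      obtain ⟨hCs, hCD⟩ := Finset.mem_filter.mp hC
      have := hDof C hCs
      rw [hCD] at this
      exact this
    · intro C hC
      obtain ⟨hCs, _⟩ := Finset.mem_filter.mp hC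
      obtain ⟨i, hik, hsize⟩ := (Finset.mem_filter.mp hCs).2
      have h1 : (univ.filter (fun j => q D j = some C)).card ≤ Nat.card C.supp := hmle D C
      simp only [hw]
      omega
  -- assemble
  have hfib : ∑ D : F.ConnectedComponent, ∑ C ∈ Small.filter (fun C => Dof C = D), 2 * w C
      = ∑ C ∈ Small, 2 * w C :=
    Finset.sum_fiberwise_of_maps_to (fun C _ => mem_univ (Dof C)) _
  have hmain : 2 * ∑ C ∈ Small, w C ≤ (2 * k + 2) * X.toFinset.card := by
    rw [Finset.mul_sum, ← hfib]
    calc ∑ D : F.ConnectedComponent, ∑ C ∈ Small.filter (fun C => Dof C = D), 2 * w C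
        ≤ ∑ D : F.ConnectedComponent, (2 * k + 2) * xD D := Finset.sum_le_sum (fun D _ => key D)
      _ = (2 * k + 2) * X.toFinset.card := by rw [← Finset.mul_sum, hsumx]
  rw [hLHS]
  have hXcard : X.ncard = X.toFinset.card := Set.ncard_eq_toFinset_card' X
  rw [hXcard]
  have h2 : 2 * ∑ C ∈ Small, w C ≤ 2 * ((k + 1) * X.toFinset.card) := by
    calc 2 * ∑ C ∈ Small, w C ≤ (2 * k + 2) * X.toFinset.card := hmain
      _ = 2 * ((k + 1) * X.toFinset.card) := by ring
  exact Nat.le_of_mul_le_mul_left h2 (by norm_num)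
end

section
/- Let S and T be disjoint finite sets, and let T₁ and T₂ be disjoint subsets of T with T₁ ∪ T₂ = T. Let H be a bipartite graph with bipartition (S,T), and suppose that |N_H(Y)| ≥ |Y ∩ T₁| + (1/2)·|Y ∩ T₂| for every Y ⊆ T. Then H has a subgraph F with V(F) ⊇ T₁ ∪ T₂ such that every connected component A of F is a path satisfying one of: (I') |V(A)| = 2; or (II') |V(A) ∩ T₂| = 2 and the two vertices of V(A) ∩ T₂ are the two endvertices of A. -/
/-!
Hall's theorem, applied after doubling every vertex of `T₁` and of `S`, turns the neighbourhood
condition into a choice of two edges of `H` at each vertex of `T₁` and one at each vertex of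
`T₂` such that every vertex of `S` is used at most twice. These edges form a graph of maximum
degree two, which is cut into the required paths by induction on the number of chosen edges
("darts"). Take a vertex `t₂` with a single dart, going to `s`. If no other dart reaches `s`,
then `t₂ s` is a component; if the other dart at `s` comes from a vertex `t` with a single dart,
then `t₂ s t` is one. Otherwise `t` has a second dart; deleting the two darts at `s` makes `t` a
vertex with a single dart in a smaller instance, and the path through `t` found there is either
an edge, kept next to the new edge `t₂ s`, or has `t` as an end and is prolonged by `t₂ s`. If no
vertex has a single dart, deleting any dart at some `t` leaves `t` as the only such vertex, so
every path found for the smaller instance is an edge.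
-/

open SimpleGraph

/-- The neighbourhood `N_H(X) = (⋃_{u ∈ X} N_H(u)) − X` of a set of vertices. -/
def nbhdSet {V : Type*} (H : SimpleGraph V) (X : Set V) : Set V :=
  {v | v ∉ X ∧ ∃ u ∈ X, H.Adj u v}

namespace LinearForest

variable {V : Type*}

def Consecutive (b : List V) (u v : V) : Prop :=
  ∃ i, ∃ h : i + 1 < b.length, b[i] = u ∧ b[i + 1] = v

namespace Consecutive

variable {b : List V} {u v : V}

theorem mem_left (h : Consecutive b u v) : u ∈ b := by
  obtain ⟨i, hi, rfl, -⟩ := h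
  exact List.getElem_mem _

theorem mem_right (h : Consecutive b u v) : v ∈ b := by
  obtain ⟨i, hi, -, rfl⟩ := h
  exact List.getElem_mem _

theorem rel {R : V → V → Prop} (hb : b.IsChain R) (h : Consecutive b u v) : R u v := by
  obtain ⟨i, hi, rfl, rfl⟩ := h
  exact List.isChain_iff_getElem.mp hb i hi

theorem getElem_iff (hb : b.Nodup) {i j : ℕ} (hi : i < b.length) (hj : j < b.length) :
    Consecutive b b[i] b[j] ↔ i + 1 = j := by
  constructor
  · rintro ⟨k, hk, hki, hkj⟩
    rw [hb.getElem_inj_iff] at hki hkj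
    omega
  · rintro rfl
    exact ⟨i, hj, rfl, rfl⟩

end Consecutive

structure IsPathFamily (H : SimpleGraph V) (B : Set (List V)) : Prop where
  isChain : ∀ b ∈ B, b.IsChain H.Adj
  nodup : ∀ b ∈ B, b.Nodup
  eq_of_mem : ∀ b ∈ B, ∀ b' ∈ B, ∀ v ∈ b, v ∈ b' → b = b'

def verts (B : Set (List V)) : Set V := {v | ∃ b ∈ B, v ∈ b}

theorem mem_verts_insert {c : List V} {B : Set (List V)} {v : V} :
    v ∈ verts (insert c B) ↔ v ∈ c ∨ v ∈ verts B := by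
  simp [verts]

theorem verts_mono {B B' : Set (List V)} (h : B' ⊆ B) : verts B' ⊆ verts B :=
  fun _ ⟨b, hb, hv⟩ => ⟨b, h hb, hv⟩

namespace IsPathFamily

variable {H : SimpleGraph V} {B : Set (List V)}

theorem mono {B' : Set (List V)} (hB : IsPathFamily H B) (h : B' ⊆ B) : IsPathFamily H B' :=
  ⟨fun b hb => hB.isChain b (h hb), fun b hb => hB.nodup b (h hb),
    fun b hb b' hb' => hB.eq_of_mem b (h hb) b' (h hb')⟩

theorem insert (hB : IsPathFamily H B) {c : List V} (hc : c.IsChain H.Adj) (hcn : c.Nodup)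
    (hfresh : ∀ v ∈ c, v ∉ verts B) : IsPathFamily H (insert c B) where
  isChain := by
    rintro b (rfl | hb)
    exacts [hc, hB.isChain b hb]
  nodup := by
    rintro b (rfl | hb)
    exacts [hcn, hB.nodup b hb]
  eq_of_mem := by
    rintro b (rfl | hb) b' (rfl | hb') v hv hv'
    · rfl
    · exact absurd ⟨b', hb', hv'⟩ (hfresh v hv)
    · exact absurd ⟨b, hb, hv⟩ (hfresh v hv')
    · exact hB.eq_of_mem b hb b' hb' v hv hv'

theorem not_mem_verts_diff (hB : IsPathFamily H B) {b : List V} (hb : b ∈ B) {v : V}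
    (hv : v ∈ b) : v ∉ verts (B \ {b}) := by
  rintro ⟨b', ⟨hb', hne⟩, hv'⟩
  exact hne (hB.eq_of_mem b' hb' b hb v hv' hv)

theorem replace (hB : IsPathFamily H B) {b c : List V} (hb : b ∈ B) (hc : c.IsChain H.Adj)
    (hcn : c.Nodup) (hcb : ∀ v ∈ c, v ∈ b ∨ v ∉ verts B) :
    IsPathFamily H (Insert.insert c (B \ {b})) :=
  (hB.mono Set.sdiff_subset).insert hc hcn fun v hv =>
    (hcb v hv).elim (hB.not_mem_verts_diff hb) fun h h' => h (verts_mono Set.sdiff_subset h')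

theorem of_eq_or_eq_reverse (hB : IsPathFamily H B) {b b₀ : List V} (hb : b ∈ B)
    (hb₀ : b₀ = b ∨ b₀ = b.reverse) : b₀.IsChain H.Adj ∧ b₀.Nodup ∧ ∀ v, v ∈ b₀ ↔ v ∈ b := by
  rcases hb₀ with rfl | rfl
  · exact ⟨hB.isChain _ hb, hB.nodup _ hb, fun _ => Iff.rfl⟩
  · exact ⟨List.isChain_reverse.2 ((hB.isChain b hb).imp fun _ _ h => h.symm),
      List.nodup_reverse.2 (hB.nodup b hb), fun _ => List.mem_reverse⟩

def toSubgraph (hB : IsPathFamily H B) : H.Subgraph where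
  verts := verts B
  Adj u v := ∃ b ∈ B, Consecutive b u v ∨ Consecutive b v u
  adj_sub := by
    rintro u v ⟨b, hb, h | h⟩
    exacts [h.rel (hB.isChain b hb), (h.rel (hB.isChain b hb)).symm]
  edge_vert := by
    rintro u v ⟨b, hb, h | h⟩
    exacts [⟨b, hb, h.mem_left⟩, ⟨b, hb, h.mem_right⟩]
  symm := ⟨fun _ _ ⟨b, hb, h⟩ => ⟨b, hb, h.symm⟩⟩

theorem toSubgraph_adj (hB : IsPathFamily H B) {u v : V} :
    hB.toSubgraph.Adj u v ↔ ∃ b ∈ B, Consecutive b u v ∨ Consecutive b v u := Iff.rfl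

theorem toSubgraph_adj_getElem (hB : IsPathFamily H B) {b : List V} (hb : b ∈ B) {i j : ℕ}
    (hi : i < b.length) (hj : j < b.length) :
    hB.toSubgraph.Adj b[i] b[j] ↔ i + 1 = j ∨ j + 1 = i := by
  have hnd := hB.nodup b hb
  rw [← Consecutive.getElem_iff hnd, ← Consecutive.getElem_iff hnd, toSubgraph_adj]
  constructor
  · rintro ⟨b', hb', h⟩
    obtain rfl := hB.eq_of_mem b hb b' hb' _ (List.getElem_mem _)
      (h.elim Consecutive.mem_left Consecutive.mem_right)
    exact h
  · exact fun h => ⟨b, hb, h⟩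

theorem mem_of_toSubgraph_reachable (hB : IsPathFamily H B) {b : List V} (hb : b ∈ B)
    {u v : hB.toSubgraph.verts} (huv : hB.toSubgraph.coe.Reachable u v) (hu : (u : V) ∈ b) :
    (v : V) ∈ b := by
  obtain ⟨w⟩ := huv
  induction w with
  | nil => exact hu
  | cons h _ ih =>
    obtain ⟨b', hb', h⟩ := hB.toSubgraph_adj.1 h
    obtain rfl := hB.eq_of_mem b hb b' hb' _ hu (h.elim Consecutive.mem_left Consecutive.mem_right)
    exact ih (h.elim Consecutive.mem_right Consecutive.mem_left)

theorem toSubgraph_reachable_of_mem (hB : IsPathFamily H B) {b : List V} (hb : b ∈ B)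
    {u v : hB.toSubgraph.verts} (hu : (u : V) ∈ b) (hv : (v : V) ∈ b) :
    hB.toSubgraph.coe.Reachable u v := by
  have h₀ : ∀ k (hk : k < b.length), hB.toSubgraph.coe.Reachable
      ⟨b[0], b, hb, List.getElem_mem _⟩ ⟨b[k], b, hb, List.getElem_mem _⟩ := by
    intro k hk
    induction k with
    | zero => rfl
    | succ k ih =>
      refine (ih (by omega)).trans (Adj.reachable ?_)
      exact (hB.toSubgraph_adj_getElem hb (by omega) hk).2 (Or.inl rfl)
  obtain ⟨i, hi, hiu⟩ := List.mem_iff_getElem.1 hu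
  obtain ⟨j, hj, hjv⟩ := List.mem_iff_getElem.1 hv
  have eu : u = ⟨b[i], b, hb, List.getElem_mem _⟩ := Subtype.ext hiu.symm
  have ev : v = ⟨b[j], b, hb, List.getElem_mem _⟩ := Subtype.ext hjv.symm
  rw [eu, ev]
  exact (h₀ i hi).symm.trans (h₀ j hj)

theorem exists_iso_pathGraph (hB : IsPathFamily H B)
    (A : hB.toSubgraph.coe.ConnectedComponent) :
    ∃ b ∈ B, ∃ φ : hB.toSubgraph.coe.induce A.supp ≃g pathGraph b.length,
      ∀ v, b[(φ v : ℕ)] = ((v : hB.toSubgraph.verts) : V) := by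
  obtain ⟨u, rfl⟩ := A.exists_rep
  obtain ⟨b, hb, hu⟩ := u.2
  have mem_supp : ∀ v : hB.toSubgraph.verts,
      v ∈ (hB.toSubgraph.coe.connectedComponentMk u).supp ↔ (v : V) ∈ b := fun v =>
    ⟨fun h => hB.mem_of_toSubgraph_reachable hb (ConnectedComponent.exact h).symm hu,
      fun h => ConnectedComponent.sound (hB.toSubgraph_reachable_of_mem hb h hu)⟩
  let ψ : Fin b.length → (hB.toSubgraph.coe.connectedComponentMk u).supp := fun i =>
    ⟨⟨b[(i : ℕ)], b, hb, List.getElem_mem _⟩, (mem_supp _).2 (List.getElem_mem _)⟩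
  have hψ : Function.Bijective ψ := by
    refine ⟨fun i j hij => Fin.ext ((hB.nodup b hb).getElem_inj_iff.1
      (congrArg (fun v => (v.1 : V)) hij)), fun v => ?_⟩
    obtain ⟨i, hi, hiv⟩ := List.mem_iff_getElem.1 ((mem_supp _).1 v.2)
    exact ⟨⟨i, hi⟩, Subtype.ext (Subtype.ext hiv)⟩
  let φ : pathGraph b.length ≃g hB.toSubgraph.coe.induce _ :=
    { Equiv.ofBijective ψ hψ with
      map_rel_iff' := fun {i j} => by
        simp only [Equiv.ofBijective_apply, comap_adj, Function.Embedding.subtype_apply,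
          Subgraph.coe_adj, pathGraph_adj]
        exact hB.toSubgraph_adj_getElem hb i.2 j.2 }
  refine ⟨b, hb, φ.symm, fun v => ?_⟩
  conv_rhs => rw [← φ.apply_symm_apply v]
  rfl

end IsPathFamily

/-- The shapes (I') and (II') of a component, for the vertex class `E` playing the role of
`T₂`. -/
def IsAdmissiblePath (E : V → Prop) (b : List V) : Prop :=
  b.length = 2 ∨ ∃ x y m, b = x :: m ++ [y] ∧ m ≠ [] ∧ E x ∧ E y ∧ ∀ v ∈ m, ¬E v

theorem mem_cons_append_singleton {x y v : V} {m : List V} :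
    v ∈ x :: m ++ [y] ↔ v = x ∨ v ∈ m ∨ v = y := by
  simp

namespace IsAdmissiblePath

variable {E E' : V → Prop} {b : List V}

theorem congr (h : IsAdmissiblePath E b) (hE : ∀ v ∈ b, E v ↔ E' v) : IsAdmissiblePath E' b := by
  refine h.imp_right ?_
  rintro ⟨x, y, m, rfl, hm, hx, hy, hmE⟩
  refine ⟨x, y, m, rfl, hm, (hE x (by simp)).1 hx, (hE y (by simp)).1 hy, fun v hv hv' => ?_⟩
  exact hmE v hv ((hE v (by simp [hv])).2 hv')

theorem two_le_length (h : IsAdmissiblePath E b) : 2 ≤ b.length := by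
  rcases h with h | ⟨x, y, m, rfl, -⟩
  · exact h.ge
  · simp

theorem exists_ne (h : IsAdmissiblePath E b) (hb : b.Nodup) (h2 : b.length ≠ 2) :
    ∃ x ∈ b, ∃ y ∈ b, x ≠ y ∧ E x ∧ E y := by
  obtain ⟨x, y, m, rfl, -, hx, hy, -⟩ := h.resolve_left h2
  refine ⟨x, by simp, y, by simp, fun hxy => ?_, hx, hy⟩
  subst hxy
  simp at hb

theorem exists_cons_eq (h : IsAdmissiblePath E b) (h2 : b.length ≠ 2) {t : V} (ht : t ∈ b)
    (hE : E t) : ∃ y m, (t :: m ++ [y] = b ∨ t :: m ++ [y] = b.reverse) ∧ E y ∧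
      ∀ v ∈ m, ¬E v := by
  obtain ⟨x, y, m, rfl, -, hx, hy, hmE⟩ := h.resolve_left h2
  rcases mem_cons_append_singleton.1 ht with rfl | ht | rfl
  · exact ⟨y, m, Or.inl rfl, hy, hmE⟩
  · exact absurd hE (hmE t ht)
  · exact ⟨x, m.reverse, Or.inr (by simp), hx, by simpa using hmE⟩

theorem getElem_iff (h : IsAdmissiblePath E b) (hb : b.Nodup) (h2 : b.length ≠ 2) {i : ℕ}
    (hi : i < b.length) : E b[i] ↔ i = 0 ∨ i = b.length - 1 := by
  obtain ⟨x, y, m, hxy, -, hx, hy, hmE⟩ := h.resolve_left h2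
  have hE : ∀ v ∈ b, E v ↔ v = x ∨ v = y := by
    intro v hv
    rw [hxy] at hv hb
    rcases mem_cons_append_singleton.1 hv with rfl | hv | rfl
    · simpa using hx
    · refine iff_of_false (hmE v hv) ?_
      rintro (rfl | rfl) <;> simp_all
    · simpa using hy
  have h0 : b[0]'(by omega) = x := by simp [hxy]
  have hlast : b[b.length - 1]'(by omega) = y := by simp [hxy]
  rw [hE _ (List.getElem_mem hi), ← h0, ← hlast, hb.getElem_inj_iff, hb.getElem_inj_iff]

end IsAdmissiblePath

def IsEnd (P : Finset (V × Bool)) (t : V) : Prop := ∃ i, (t, i) ∈ P ∧ (t, !i) ∉ P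

theorem isEnd_iff_of_mem {P : Finset (V × Bool)} {t : V} {i : Bool} (h : (t, i) ∈ P) :
    IsEnd P t ↔ (t, !i) ∉ P := by
  refine ⟨?_, fun h' => ⟨i, h, h'⟩⟩
  rintro ⟨k, hk, hk'⟩
  cases i <;> cases k <;> simp_all

theorem not_isEnd_of_forall_fst_ne {P : Finset (V × Bool)} {t : V} (h : ∀ l ∈ P, l.1 ≠ t) :
    ¬IsEnd P t := fun ⟨_, hk, _⟩ => h _ hk rfl

/-- A dart `(t, i)` stands for the `i`-th edge wanted at `t`: in the theorem a vertex of `T₁`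
carries two darts and a vertex of `T₂` only one, which is what `IsEnd` detects. The dart `l` is
sent to the copy `(σ l).2` of a neighbour `(σ l).1` of `t`, so injectivity on `P` lets every
vertex receive at most two darts. -/
structure IsDartMatching (H : SimpleGraph V) (P : Finset (V × Bool))
    (σ : V × Bool → V × Bool) : Prop where
  adj : ∀ l ∈ P, H.Adj l.1 (σ l).1
  fst_ne : ∀ l ∈ P, ∀ l' ∈ P, (σ l).1 ≠ l'.1
  injOn : Set.InjOn σ P

namespace IsDartMatching

variable {H : SimpleGraph V} {P P' : Finset (V × Bool)} {σ : V × Bool → V × Bool}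

theorem mono (hσ : IsDartMatching H P σ) (h : P' ⊆ P) : IsDartMatching H P' σ :=
  ⟨fun l hl => hσ.adj l (h hl), fun l hl l' hl' => hσ.fst_ne l (h hl) l' (h hl'),
    hσ.injOn.mono h⟩

theorem eq_of_fst_eq (hσ : IsDartMatching H P σ) {l d : V × Bool} (hl : l ∈ P) (hd : d ∈ P)
    (hne : l ≠ d) (h : (σ l).1 = (σ d).1) : σ l = ((σ d).1, !(σ d).2) :=
  Prod.ext h (Bool.eq_not_iff.2 fun h' => hne (hσ.injOn hl hd (Prod.ext h h')))

end IsDartMatching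

structure IsPathCover (H : SimpleGraph V) (P : Finset (V × Bool)) (σ : V × Bool → V × Bool)
    (B : Set (List V)) : Prop extends IsPathFamily H B where
  fst_mem_verts : ∀ l ∈ P, l.1 ∈ verts B
  -- keeps the vertices of deleted darts off the paths built for a smaller `P`
  exists_of_mem_verts : ∀ v ∈ verts B, ∃ l ∈ P, l.1 = v ∨ (σ l).1 = v
  admissible : ∀ b ∈ B, IsAdmissiblePath (IsEnd P) b

theorem isPathCover_empty (H : SimpleGraph V) (σ : V × Bool → V × Bool) :
    IsPathCover H ∅ σ ∅ :=
  ⟨⟨by simp, by simp, by simp⟩, by simp, by simp [verts], by simp⟩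

theorem IsPathCover.not_mem_verts {H : SimpleGraph V} {P : Finset (V × Bool)}
    {σ : V × Bool → V × Bool} {B : Set (List V)} (hB : IsPathCover H P σ B) {v : V}
    (h : ∀ l ∈ P, l.1 ≠ v ∧ (σ l).1 ≠ v) : v ∉ verts B := fun hv => by
  obtain ⟨l, hl, hv⟩ := hB.exists_of_mem_verts v hv
  exact hv.elim (h l hl).1 (h l hl).2

noncomputable def darts [Finite V] (T₁ T₂ : Set V) : Finset (V × Bool) :=
  (Set.toFinite {l : V × Bool | l.1 ∈ T₁ ∨ l.1 ∈ T₂ ∧ l.2 = false}).toFinset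

section Darts

variable [Finite V] {T₁ T₂ : Set V}

theorem mem_darts {l : V × Bool} : l ∈ darts T₁ T₂ ↔ l.1 ∈ T₁ ∨ l.1 ∈ T₂ ∧ l.2 = false :=
  Set.Finite.mem_toFinset _

theorem isEnd_darts_iff (h : Disjoint T₁ T₂) {v : V} : IsEnd (darts T₁ T₂) v ↔ v ∈ T₂ := by
  constructor
  · rintro ⟨i, hi, hi'⟩
    rw [mem_darts] at hi hi'
    tauto
  · intro hv
    refine ⟨false, mem_darts.2 (Or.inr ⟨hv, rfl⟩), fun h' => ?_⟩
    rcases mem_darts.1 h' with h' | ⟨-, h'⟩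
    exacts [Set.disjoint_left.1 h h' hv, Bool.noConfusion h']

theorem card_filter_darts_le [DecidableEq V] (Y : Finset V) :
    ((darts T₁ T₂).filter (·.1 ∈ Y)).card ≤ 2 * (↑Y ∩ T₁).ncard + (↑Y ∩ T₂).ncard := by
  classical
  have hncard : ∀ T : Set V, (↑Y ∩ T).ncard = (Y.filter (· ∈ T)).card := fun T => by
    rw [← Set.ncard_coe_finset, Finset.coe_filter]
    rfl
  calc ((darts T₁ T₂).filter (·.1 ∈ Y)).card
      ≤ (Y.filter (· ∈ T₁) ×ˢ Finset.univ ∪ Y.filter (· ∈ T₂) ×ˢ {false}).card := by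
        refine Finset.card_le_card fun l hl => ?_
        obtain ⟨hl, hlY⟩ := Finset.mem_filter.1 hl
        rcases mem_darts.1 hl with h | ⟨h, h'⟩
        · simp [hlY, h]
        · simp [hlY, h, ← h']
    _ ≤ _ := (Finset.card_union_le _ _).trans (by simp [hncard, mul_comm])

end Darts

section Hall

variable [Fintype V] [DecidableEq V] {H : SimpleGraph V} [DecidableRel H.Adj]

theorem exists_injOn_of_card_le (P : Finset (V × Bool))
    (hP : ∀ Y : Finset V,
      (P.filter (·.1 ∈ Y)).card ≤ 2 * (Y.biUnion fun y => H.neighborFinset y).card) :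
    ∃ σ : V × Bool → V × Bool, Set.InjOn σ P ∧ ∀ l ∈ P, H.Adj l.1 (σ l).1 := by
  have hall : ∀ X : Finset P,
      X.card ≤ (X.biUnion fun l => H.neighborFinset l.1.1 ×ˢ (Finset.univ : Finset Bool)).card := by
    intro X
    set Y := X.image fun l => l.1.1
    have hXY : X.biUnion (fun l => H.neighborFinset l.1.1 ×ˢ (Finset.univ : Finset Bool)) =
        (Y.biUnion fun y => H.neighborFinset y) ×ˢ Finset.univ := by
      ext
      simp [Y]
    calc X.card = (X.map (Function.Embedding.subtype _)).card := (Finset.card_map _).symm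
      _ ≤ (P.filter (·.1 ∈ Y)).card := Finset.card_le_card fun _ hl => by
        obtain ⟨l, hlX, rfl⟩ := Finset.mem_map.1 hl
        exact Finset.mem_filter.2 ⟨l.2, Finset.mem_image_of_mem _ hlX⟩
      _ ≤ 2 * (Y.biUnion fun y => H.neighborFinset y).card := hP Y
      _ = _ := by rw [hXY, Finset.card_product, Finset.card_univ, Fintype.card_bool, mul_comm]
  obtain ⟨f, hf, hfmem⟩ := (Finset.all_card_le_biUnion_card_iff_exists_injective _).1 hall
  refine ⟨fun l => if h : l ∈ P then f ⟨l, h⟩ else l, fun l hl l' hl' h => ?_, fun l hl => ?_⟩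
  · simp only [dif_pos (Finset.mem_coe.1 hl), dif_pos (Finset.mem_coe.1 hl')] at h
    exact congrArg Subtype.val (hf h)
  · simpa [dif_pos hl] using hfmem ⟨l, hl⟩

theorem card_filter_darts_le_of_ncard_le {T₁ T₂ : Set V}
    (hN : ∀ Y ⊆ T₁ ∪ T₂,
      ((Y ∩ T₁).ncard : ℚ) + (1 / 2) * ((Y ∩ T₂).ncard : ℚ) ≤ ((nbhdSet H Y).ncard : ℚ))
    (Y : Finset V) :
    ((darts T₁ T₂).filter (·.1 ∈ Y)).card ≤ 2 * (Y.biUnion fun y => H.neighborFinset y).card := by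
  have hY := hN (↑Y ∩ (T₁ ∪ T₂)) Set.inter_subset_right
  rw [Set.inter_assoc, Set.inter_assoc, Set.union_inter_cancel_left,
    Set.union_inter_cancel_right] at hY
  have hnb : ((nbhdSet H (↑Y ∩ (T₁ ∪ T₂))).ncard : ℚ) ≤
      (Y.biUnion fun y => H.neighborFinset y).card := by
    rw [← Set.ncard_coe_finset]
    refine Nat.cast_le.2 (Set.ncard_le_ncard fun v ⟨_, u, hu, huv⟩ => ?_)
    simpa using ⟨u, hu.1, huv⟩
  have hq : (2 * (↑Y ∩ T₁).ncard + (↑Y ∩ T₂).ncard : ℚ) ≤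
      2 * (Y.biUnion fun y => H.neighborFinset y).card := by
    linarith
  exact (card_filter_darts_le Y).trans (by exact_mod_cast hq)

end Hall

section Erase

variable [DecidableEq V] {H : SimpleGraph V} {P : Finset (V × Bool)} {σ : V × Bool → V × Bool}
  {t t₂ v : V} {i i₂ : Bool}

theorem fst_ne_of_mem_erase (hend : (t, !i) ∉ P) {l : V × Bool} (hl : l ∈ P.erase (t, i)) :
    l.1 ≠ t := by
  obtain ⟨hne, hlP⟩ := Finset.mem_erase.1 hl
  rcases l with ⟨u, k⟩
  rintro rfl
  have hk : k = !i := Bool.eq_not_iff.2 fun h => hne (by rw [h])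
  exact hend (hk ▸ hlP)

theorem isEnd_erase_iff {d : V × Bool} (hv : v ≠ d.1) : IsEnd (P.erase d) v ↔ IsEnd P v := by
  have hmem : ∀ k, (v, k) ∈ P.erase d ↔ (v, k) ∈ P := fun k =>
    ⟨Finset.mem_of_mem_erase, Finset.mem_erase_of_ne_of_mem (fun h => hv (congrArg Prod.fst h))⟩
  simp only [IsEnd, hmem]

theorem isEnd_erase_erase_iff (hv₂ : v ≠ t₂) (hv : v ≠ t) :
    IsEnd ((P.erase (t₂, i₂)).erase (t, i)) v ↔ IsEnd P v := by
  rw [isEnd_erase_iff hv, isEnd_erase_iff hv₂]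

theorem isAdmissiblePath_extend (hσ : IsDartMatching H P σ) (hd : (t₂, i₂) ∈ P)
    (hend₂ : (t₂, !i₂) ∉ P) (hl : (t, i) ∈ P) (hnend : (t, !i) ∈ P) {y : V} {m : List V}
    (ht₂ : t₂ ∉ t :: m ++ [y]) (hnd : (t :: m ++ [y]).Nodup)
    (hy : IsEnd ((P.erase (t₂, i₂)).erase (t, i)) y)
    (hmE : ∀ v ∈ m, ¬IsEnd ((P.erase (t₂, i₂)).erase (t, i)) v) :
    IsAdmissiblePath (IsEnd P) (t₂ :: (σ (t₂, i₂)).1 :: t :: m ++ [y]) := by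
  have hEnd : ∀ v ∈ t :: m ++ [y], v ≠ t →
      (IsEnd ((P.erase (t₂, i₂)).erase (t, i)) v ↔ IsEnd P v) := fun v hv hvt =>
    isEnd_erase_erase_iff (fun h => ht₂ (h ▸ hv)) hvt
  have hyt : y ≠ t := by
    rintro rfl
    simp at hnd
  refine Or.inr ⟨t₂, y, (σ (t₂, i₂)).1 :: t :: m, rfl, by simp, ⟨i₂, hd, hend₂⟩,
    (hEnd y (by simp) hyt).1 hy, ?_⟩
  simp only [List.mem_cons, forall_eq_or_imp]
  refine ⟨not_isEnd_of_forall_fst_ne fun l hl' => (hσ.fst_ne _ hd l hl').symm,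
    fun h => (isEnd_iff_of_mem hl).1 h hnend, fun v hv h => ?_⟩
  have hvt : v ≠ t := by
    rintro rfl
    simp [hv] at hnd
  exact hmE v hv ((hEnd v (by simp [hv]) hvt).2 h)

end Erase

namespace IsPathCover

variable [DecidableEq V] {H : SimpleGraph V} {P P' : Finset (V × Bool)}
  {σ : V × Bool → V × Bool} {B : Set (List V)} {t t₂ : V} {i i₂ : Bool}

theorem of_forall_not_isEnd (hB : IsPathCover H (P.erase (t, i)) σ B) (hi : (t, i) ∈ P)
    (hP : ∀ v, ¬IsEnd P v) : IsPathCover H P σ B := by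
  have ht : (t, !i) ∈ P := by
    by_contra h
    exact hP t ⟨i, hi, h⟩
  have hend : ∀ v, IsEnd (P.erase (t, i)) v → v = t := fun v hv => by
    by_contra hne
    exact hP v ((isEnd_erase_iff hne).1 hv)
  refine ⟨hB.toIsPathFamily, fun l hl => ?_, fun v hv => ?_, fun b hb => ?_⟩
  · by_cases hlt : l = (t, i)
    · exact hlt ▸ hB.fst_mem_verts (t, !i) (Finset.mem_erase_of_ne_of_mem (by simp) ht)
    · exact hB.fst_mem_verts l (Finset.mem_erase_of_ne_of_mem hlt hl)
  · obtain ⟨l, hl, h⟩ := hB.exists_of_mem_verts v hv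
    exact ⟨l, Finset.mem_of_mem_erase hl, h⟩
  · by_contra h
    obtain ⟨x, -, y, -, hxy, hx, hy⟩ :=
      (hB.admissible b hb).exists_ne (hB.nodup b hb) (fun h2 => h (Or.inl h2))
    exact hxy ((hend x hx).trans (hend y hy).symm)

theorem fst_not_mem_verts (hσ : IsDartMatching H P σ) (hd : (t, i) ∈ P) (hend : (t, !i) ∉ P)
    (hP' : P' ⊆ P.erase (t, i)) (hB : IsPathCover H P' σ B) : t ∉ verts B :=
  hB.not_mem_verts fun l hl =>
    ⟨fst_ne_of_mem_erase hend (hP' hl), hσ.fst_ne l (Finset.mem_of_mem_erase (hP' hl)) _ hd⟩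

theorem target_not_mem_verts (hσ : IsDartMatching H P σ) (hd : (t, i) ∈ P)
    (hP' : P' ⊆ P.erase (t, i)) (hB : IsPathCover H P' σ B)
    (hs : ∀ l ∈ P', (σ l).1 ≠ (σ (t, i)).1) : (σ (t, i)).1 ∉ verts B :=
  hB.not_mem_verts fun l hl =>
    ⟨(hσ.fst_ne _ hd l (Finset.mem_of_mem_erase (hP' hl))).symm, hs l hl⟩

theorem insert_pair (hσ : IsDartMatching H P σ) (hd : (t, i) ∈ P) (hend : (t, !i) ∉ P)
    (hP' : P' ⊆ P.erase (t, i)) (hB : IsPathCover H P' σ B) (hsB : (σ (t, i)).1 ∉ verts B)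
    (hcover : ∀ l ∈ P.erase (t, i), l.1 ∈ verts B)
    (hadm : ∀ b ∈ B, IsAdmissiblePath (IsEnd P) b) :
    IsPathCover H P σ (insert [t, (σ (t, i)).1] B) := by
  have hfresh : ∀ v ∈ [t, (σ (t, i)).1], v ∉ verts B := by
    simp only [List.mem_cons, List.not_mem_nil, or_false]
    rintro v (rfl | rfl)
    exacts [fst_not_mem_verts hσ hd hend hP' hB, hsB]
  refine ⟨hB.toIsPathFamily.insert (List.isChain_pair.2 (hσ.adj _ hd))
    (by simpa using (hσ.adj _ hd).ne) hfresh, fun l hl => ?_, fun v hv => ?_, ?_⟩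
  · rw [mem_verts_insert]
    by_cases hld : l = (t, i)
    · simp [hld]
    · exact Or.inr (hcover l (Finset.mem_erase_of_ne_of_mem hld hl))
  · rcases mem_verts_insert.1 hv with hv | hv
    · simp only [List.mem_cons, List.not_mem_nil, or_false] at hv
      exact ⟨_, hd, hv.imp Eq.symm Eq.symm⟩
    · obtain ⟨l, hl, h⟩ := hB.exists_of_mem_verts v hv
      exact ⟨l, Finset.mem_of_mem_erase (hP' hl), h⟩
  · rintro b (rfl | hb)
    exacts [Or.inl rfl, hadm b hb]

theorem fresh_of_erase_erase (hσ : IsDartMatching H P σ) (hd : (t₂, i₂) ∈ P)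
    (hend₂ : (t₂, !i₂) ∉ P) (hl : (t, i) ∈ P)
    (hσl : σ (t, i) = ((σ (t₂, i₂)).1, !(σ (t₂, i₂)).2))
    (hB : IsPathCover H ((P.erase (t₂, i₂)).erase (t, i)) σ B) :
    t ≠ t₂ ∧ t₂ ∉ verts B ∧ (σ (t₂, i₂)).1 ∉ verts B := by
  have hne : (t, i) ≠ (t₂, i₂) := fun h => by
    rw [h, Prod.ext_iff] at hσl
    simp at hσl
  refine ⟨fst_ne_of_mem_erase hend₂ (Finset.mem_erase_of_ne_of_mem hne hl),
    fst_not_mem_verts hσ hd hend₂ (Finset.erase_subset _ _) hB,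
    target_not_mem_verts hσ hd (Finset.erase_subset _ _) hB fun l hl' h => ?_⟩
  obtain ⟨hlt, hl₂, hlP⟩ := by simpa using hl'
  exact hlt (hσ.injOn hlP hl (by rw [hσ.eq_of_fst_eq hlP hd hl₂ h, hσl]))

theorem insert_triple (hσ : IsDartMatching H P σ) (hd : (t₂, i₂) ∈ P) (hend₂ : (t₂, !i₂) ∉ P)
    (hl : (t, i) ∈ P) (hσl : σ (t, i) = ((σ (t₂, i₂)).1, !(σ (t₂, i₂)).2)) (hend : (t, !i) ∉ P)
    (hB : IsPathCover H ((P.erase (t₂, i₂)).erase (t, i)) σ B) :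
    IsPathCover H P σ (insert [t₂, (σ (t₂, i₂)).1, t] B) := by
  obtain ⟨htt₂, ht₂B, hsB⟩ := fresh_of_erase_erase hσ hd hend₂ hl hσl hB
  have htB : t ∉ verts B := fst_not_mem_verts hσ hl hend
    (Finset.erase_subset_erase _ (Finset.erase_subset _ _)) hB
  have ht₂s := hσ.adj _ hd
  have hst : H.Adj (σ (t₂, i₂)).1 t := by simpa [hσl] using (hσ.adj _ hl).symm
  have hc : ∀ v ∈ [t₂, (σ (t₂, i₂)).1, t], v = t₂ ∨ v = (σ (t₂, i₂)).1 ∨ v = t := by simp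
  refine ⟨hB.toIsPathFamily.insert (List.isChain_cons_cons.2 ⟨ht₂s, List.isChain_pair.2 hst⟩)
    (by simp [ht₂s.ne, hst.ne, htt₂.symm]) ?_, fun l hl' => ?_, fun v hv => ?_, ?_⟩
  · intro v hv
    rcases hc v hv with rfl | rfl | rfl <;> assumption
  · rw [mem_verts_insert]
    by_cases hl₂ : l = (t₂, i₂)
    · simp [hl₂]
    by_cases hlt : l = (t, i)
    · simp [hlt]
    exact Or.inr (hB.fst_mem_verts l (by simp [hl₂, hlt, hl']))
  · rcases mem_verts_insert.1 hv with hv | hv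
    · rcases hc v hv with rfl | rfl | rfl
      exacts [⟨_, hd, Or.inl rfl⟩, ⟨_, hd, Or.inr rfl⟩, ⟨_, hl, Or.inl rfl⟩]
    · obtain ⟨l, hl', h⟩ := hB.exists_of_mem_verts v hv
      exact ⟨l, Finset.mem_of_mem_erase (Finset.mem_of_mem_erase hl'), h⟩
  · rintro b (rfl | hb)
    · refine Or.inr ⟨t₂, t, [(σ (t₂, i₂)).1], rfl, by simp, ⟨i₂, hd, hend₂⟩, ⟨i, hl, hend⟩, ?_⟩
      simpa using not_isEnd_of_forall_fst_ne fun l hl' => (hσ.fst_ne _ hd l hl').symm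
    · refine (hB.admissible b hb).congr fun v hv => ?_
      exact isEnd_erase_erase_iff (fun h => ht₂B ⟨b, hb, h ▸ hv⟩) (fun h => htB ⟨b, hb, h ▸ hv⟩)

theorem insert_extend (hσ : IsDartMatching H P σ) (hd : (t₂, i₂) ∈ P) (hend₂ : (t₂, !i₂) ∉ P)
    (hl : (t, i) ∈ P) (hσl : σ (t, i) = ((σ (t₂, i₂)).1, !(σ (t₂, i₂)).2)) (hnend : (t, !i) ∈ P)
    (hB : IsPathCover H ((P.erase (t₂, i₂)).erase (t, i)) σ B) {b : List V} (hb : b ∈ B)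
    {y : V} {m : List V} (hb₀ : t :: m ++ [y] = b ∨ t :: m ++ [y] = b.reverse)
    (hy : IsEnd ((P.erase (t₂, i₂)).erase (t, i)) y)
    (hmE : ∀ v ∈ m, ¬IsEnd ((P.erase (t₂, i₂)).erase (t, i)) v) :
    IsPathCover H P σ (insert (t₂ :: (σ (t₂, i₂)).1 :: t :: m ++ [y]) (B \ {b})) := by
  obtain ⟨-, ht₂B, hsB⟩ := fresh_of_erase_erase hσ hd hend₂ hl hσl hB
  obtain ⟨hchain₀, hnd₀, hmem₀⟩ := hB.of_eq_or_eq_reverse hb hb₀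
  set s := (σ (t₂, i₂)).1
  have hvB : ∀ v ∈ t :: m ++ [y], v ∈ verts B := fun v hv => ⟨b, hb, (hmem₀ v).1 hv⟩
  have ht₂s := hσ.adj _ hd
  have hst : H.Adj s t := by simpa [hσl] using (hσ.adj _ hl).symm
  have hc : ∀ v ∈ t₂ :: s :: t :: m ++ [y], v = t₂ ∨ v = s ∨ v ∈ t :: m ++ [y] := by simp
  refine ⟨hB.replace hb ((hchain₀.cons (by simpa using hst)).cons (by simpa using ht₂s))
    (List.nodup_cons.2 ⟨?_, List.nodup_cons.2 ⟨fun h => hsB (hvB s h), hnd₀⟩⟩) ?_,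
    fun l hl' => ?_, fun v hv => ?_, ?_⟩
  · intro h
    rcases List.mem_cons.1 h with h | h
    exacts [ht₂s.ne h, ht₂B (hvB t₂ h)]
  · intro v hv
    rcases hc v hv with rfl | rfl | hv
    exacts [Or.inr ht₂B, Or.inr hsB, Or.inl ((hmem₀ v).1 hv)]
  · rw [mem_verts_insert]
    by_cases hl₂ : l = (t₂, i₂)
    · simp [hl₂]
    by_cases hlt : l = (t, i)
    · simp [hlt]
    obtain ⟨b', hb', hlb'⟩ := hB.fst_mem_verts l (by simp [hl₂, hlt, hl'])
    by_cases hbb' : b' = b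
    · subst hbb'
      exact Or.inl (List.mem_cons_of_mem _ (List.mem_cons_of_mem _ ((hmem₀ _).2 hlb')))
    · exact Or.inr ⟨b', ⟨hb', hbb'⟩, hlb'⟩
  · have hv' : v = t₂ ∨ v = s ∨ v ∈ verts B := by
      rcases mem_verts_insert.1 hv with hv | hv
      · exact (hc v hv).imp_right (Or.imp_right (hvB v))
      · exact Or.inr (Or.inr (verts_mono Set.sdiff_subset hv))
    rcases hv' with rfl | rfl | hv
    · exact ⟨_, hd, Or.inl rfl⟩
    · exact ⟨_, hd, Or.inr rfl⟩
    · obtain ⟨l, hl', h⟩ := hB.exists_of_mem_verts v hv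
      exact ⟨l, Finset.mem_of_mem_erase (Finset.mem_of_mem_erase hl'), h⟩
  · rintro b' (rfl | ⟨hb', hbb'⟩)
    · exact isAdmissiblePath_extend hσ hd hend₂ hl hnend (fun h => ht₂B (hvB t₂ h)) hnd₀ hy hmE
    · refine (hB.admissible b' hb').congr fun v hv => ?_
      exact isEnd_erase_erase_iff (fun h => ht₂B ⟨b', hb', h ▸ hv⟩)
        (fun h => hB.not_mem_verts_diff hb ((hmem₀ t).1 (by simp)) ⟨b', ⟨hb', hbb'⟩, h ▸ hv⟩)

theorem exists_of_two_darts (hσ : IsDartMatching H P σ) (hd : (t₂, i₂) ∈ P)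
    (hend₂ : (t₂, !i₂) ∉ P) (hl : (t, i) ∈ P)
    (hσl : σ (t, i) = ((σ (t₂, i₂)).1, !(σ (t₂, i₂)).2)) (hnend : (t, !i) ∈ P)
    (hB : IsPathCover H ((P.erase (t₂, i₂)).erase (t, i)) σ B) : ∃ B, IsPathCover H P σ B := by
  obtain ⟨htt₂, ht₂B, hsB⟩ := fresh_of_erase_erase hσ hd hend₂ hl hσl hB
  have htP : (t, !i) ∈ (P.erase (t₂, i₂)).erase (t, i) := by simp [hnend, htt₂]
  have htE : IsEnd ((P.erase (t₂, i₂)).erase (t, i)) t := ⟨!i, htP, by simp⟩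
  obtain ⟨b, hb, htb⟩ := hB.fst_mem_verts _ htP
  by_cases h2 : b.length = 2
  · refine ⟨_, insert_pair hσ hd hend₂ (Finset.erase_subset _ _) hB hsB (fun l hl' => ?_) ?_⟩
    · by_cases hlt : l = (t, i)
      · exact hlt ▸ ⟨b, hb, htb⟩
      · exact hB.fst_mem_verts l (Finset.mem_erase_of_ne_of_mem hlt hl')
    · intro b' hb'
      by_cases hbb' : b' = b
      · exact Or.inl (hbb' ▸ h2)
      refine (hB.admissible b' hb').congr fun v hv => isEnd_erase_erase_iff
        (fun h => ht₂B ⟨b', hb', h ▸ hv⟩) fun h => hbb' ?_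
      exact hB.eq_of_mem b' hb' b hb v hv (h ▸ htb)
  · obtain ⟨y, m, hb₀, hy, hmE⟩ := (hB.admissible b hb).exists_cons_eq h2 htb htE
    exact ⟨_, insert_extend hσ hd hend₂ hl hσl hnend hB hb hb₀ hy hmE⟩

end IsPathCover

theorem exists_isPathCover [DecidableEq V] {H : SimpleGraph V} {σ : V × Bool → V × Bool}
    {P : Finset (V × Bool)} (hσ : IsDartMatching H P σ) : ∃ B, IsPathCover H P σ B := by
  induction P using Finset.strongInduction with
  | H P ih =>
  rcases P.eq_empty_or_nonempty with rfl | ⟨⟨t, i⟩, hi⟩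
  · exact ⟨∅, isPathCover_empty H σ⟩
  by_cases hE : ∃ t₂ i₂, (t₂, i₂) ∈ P ∧ (t₂, !i₂) ∉ P
  · obtain ⟨t₂, i₂, hd, hend₂⟩ := hE
    have IH : ∀ P' ⊆ P.erase (t₂, i₂), ∃ B, IsPathCover H P' σ B := fun P' hP' =>
      ih P' (hP'.trans_ssubset (Finset.erase_ssubset hd))
        (hσ.mono (hP'.trans (Finset.erase_subset _ _)))
    -- is the second copy of the vertex reached by `(t₂, i₂)` taken by another dart?
    by_cases hl : ∃ l ∈ P, σ l = ((σ (t₂, i₂)).1, !(σ (t₂, i₂)).2)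
    · obtain ⟨⟨t, i⟩, hl, hσl⟩ := hl
      obtain ⟨B, hB⟩ := IH _ (Finset.erase_subset _ _)
      by_cases hnend : (t, !i) ∈ P
      · exact hB.exists_of_two_darts hσ hd hend₂ hl hσl hnend
      · exact ⟨_, hB.insert_triple hσ hd hend₂ hl hσl hnend⟩
    · obtain ⟨B, hB⟩ := IH _ subset_rfl
      have hsB : (σ (t₂, i₂)).1 ∉ verts B := IsPathCover.target_not_mem_verts hσ hd subset_rfl hB
        fun l hl' h => hl ⟨l, Finset.mem_of_mem_erase hl',
          hσ.eq_of_fst_eq (Finset.mem_of_mem_erase hl') hd (Finset.ne_of_mem_erase hl') h⟩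
      have ht₂B := IsPathCover.fst_not_mem_verts hσ hd hend₂ subset_rfl hB
      refine ⟨_, IsPathCover.insert_pair hσ hd hend₂ subset_rfl hB hsB hB.fst_mem_verts
        fun b hb => (hB.admissible b hb).congr fun v hv => ?_⟩
      exact isEnd_erase_iff fun (h : v = t₂) => ht₂B ⟨b, hb, h ▸ hv⟩
  · push Not at hE
    obtain ⟨B, hB⟩ := ih _ (Finset.erase_ssubset hi) (hσ.mono (Finset.erase_subset _ _))
    exact ⟨B, hB.of_forall_not_isEnd hi fun v ⟨k, hk, hk'⟩ => hk' (hE v k hk)⟩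

end LinearForest

open LinearForest in
/-- Lemma 3.1.1. -/
theorem bipartite_linear_forest_aux {V : Type*} [Fintype V] (S T T₁ T₂ : Set V)
    (hST : Disjoint S T)
    (hT12 : Disjoint T₁ T₂) (hT12T : T₁ ∪ T₂ = T)
    (H : SimpleGraph V)
    (hbip : ∀ u v, H.Adj u v → (u ∈ S ∧ v ∈ T) ∨ (u ∈ T ∧ v ∈ S))
    (hN : ∀ Y ⊆ T,
      ((Y ∩ T₁).ncard : ℚ) + (1 / 2) * ((Y ∩ T₂).ncard : ℚ) ≤ ((nbhdSet H Y).ncard : ℚ)) :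
    ∃ F : H.Subgraph, T₁ ∪ T₂ ⊆ F.verts ∧
      ∀ A : F.coe.ConnectedComponent,
        -- every component is a path
        (∃ n, Nonempty (F.coe.induce A.supp ≃g SimpleGraph.pathGraph n)) ∧
        -- (I'): the component has exactly two vertices, or
        (Nat.card A.supp = 2 ∨
          -- (II'): `|V(A) ∩ T₂| = 2` and the two vertices of `V(A) ∩ T₂` are the
          -- endvertices of the path `A`.
          (∃ (n : ℕ) (hn : 2 ≤ n)
              (φ : F.coe.induce A.supp ≃g SimpleGraph.pathGraph n),
              ∀ v : A.supp, ((v : F.verts) : V) ∈ T₂ ↔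
                (φ v = (⟨0, by omega⟩ : Fin n) ∨ φ v = (⟨n - 1, by omega⟩ : Fin n)))) := by
  classical
  subst hT12T
  obtain ⟨σ, hinj, hadj⟩ :=
    exists_injOn_of_card_le (darts T₁ T₂) (card_filter_darts_le_of_ncard_le hN)
  have hS : ∀ l ∈ darts T₁ T₂, (σ l).1 ∈ S := fun l hl =>
    ((hbip _ _ (hadj l hl)).resolve_left fun h =>
      Set.disjoint_left.1 hST h.1 ((mem_darts.1 hl).imp id And.left)).2
  have hσ : IsDartMatching H (darts T₁ T₂) σ := ⟨hadj, fun l hl l' hl' h =>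
    Set.disjoint_left.1 hST (h ▸ hS l hl) ((mem_darts.1 hl').imp id And.left), hinj⟩
  obtain ⟨B, hB⟩ := exists_isPathCover hσ
  refine ⟨hB.toSubgraph, fun v hv => hB.fst_mem_verts (v, false)
    (mem_darts.2 (hv.imp id fun h => ⟨h, rfl⟩)), fun A => ?_⟩
  obtain ⟨b, hb, φ, hφ⟩ := hB.exists_iso_pathGraph A
  refine ⟨⟨_, ⟨φ⟩⟩, ?_⟩
  by_cases h2 : b.length = 2
  · exact Or.inl ((Nat.card_congr φ.toEquiv).trans (by simp [h2]))
  refine Or.inr ⟨b.length, (hB.admissible b hb).two_le_length, φ, fun v => ?_⟩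
  rw [← hφ v, ← isEnd_darts_iff hT12, (hB.admissible b hb).getElem_iff (hB.nodup b hb) h2,
    Fin.ext_iff, Fin.ext_iff]
end

section
/- Let G be a hypomatchable graph and let (H₁,…,H_m) be an ear decomposition of G in which every H_i (1 ≤ i ≤ m) is a cycle. Let i₁,…,i_m be a permutation of 1,…,m such that V(H_{i_l}) ∩ (⋃_{1≤j≤l−1} V(H_{i_j})) ≠ ∅ for each l with 2 ≤ l ≤ m. Then (H_{i₁},…,H_{i_m}) is also an ear decomposition of G. -/
open SimpleGraph

/-- `G.IsPerfectMatchingOn M s`: `M` is a set of edges of `G` forming a perfect matching of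
the induced subgraph of `G` on `s`. -/
def SimpleGraph.IsPerfectMatchingOn {V : Type*} (G : SimpleGraph V)
    (M : Set (Sym2 V)) (s : Set V) : Prop :=
  M ⊆ G.edgeSet ∧ (∀ e ∈ M, ∀ v ∈ e, v ∈ s) ∧ (∀ v ∈ s, ∃! e, e ∈ M ∧ v ∈ e)

/-- `G` is hypomatchable if `G − x` has a perfect matching for every vertex `x`. -/
def SimpleGraph.Hypomatchable {V : Type*} (G : SimpleGraph V) : Prop :=
  ∀ x : V, ∃ M : Set (Sym2 V), G.IsPerfectMatchingOn M {x}ᶜ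

/-- `(H 0, H 1, …, H m)` is an ear decomposition of `G`:
(E0) the `H i` are pairwise edge-disjoint;
(E1) their vertex sets cover `V(G)`;
(E2) each `H i` has an odd number of edges, at least `3`;
(E3) `H 0` is a cycle;
(E4) for `i ≥ 1`, either `H i` is a path and exactly its endvertices (its vertices of
degree one) lie in `⋃_{j<i} V(H j)`, or `H i` is a cycle meeting `⋃_{j<i} V(H j)` in
exactly one vertex. -/
def IsEarDecomposition {V : Type*} (G : SimpleGraph V) {m : ℕ}
    (H : Fin (m + 1) → G.Subgraph) : Prop :=
  (∀ i j, i ≠ j → Disjoint (H i).edgeSet (H j).edgeSet) ∧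
  (⋃ i, (H i).verts) = Set.univ ∧
  (∀ i, Odd (H i).edgeSet.ncard ∧ 3 ≤ (H i).edgeSet.ncard) ∧
  (∃ n, Nonempty ((H 0).coe ≃g SimpleGraph.cycleGraph n)) ∧
  (∀ i : Fin (m + 1), 0 < i.val →
    ((∃ n, Nonempty ((H i).coe ≃g SimpleGraph.pathGraph n)) ∧
      (∀ v ∈ (H i).verts,
        (v ∈ ⋃ j, ⋃ (_ : j < i), (H j).verts ↔ ((H i).neighborSet v).ncard = 1))) ∨
    ((∃ n, Nonempty ((H i).coe ≃g SimpleGraph.cycleGraph n)) ∧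
      ((H i).verts ∩ ⋃ j, ⋃ (_ : j < i), (H j).verts).ncard = 1))

/-- `P_𝓗(i) = H i − ⋃_{j<i} V(H j)`, as a vertex set. -/
def earPV {V : Type*} {G : SimpleGraph V} {m : ℕ} (H : Fin (m + 1) → G.Subgraph)
    (i : Fin (m + 1)) : Set V :=
  (H i).verts \ ⋃ j, ⋃ (_ : j < i), (H j).verts

/-!
For any ordering of the ears, `∑ᵢ |V(Hᵢ) ∩ ⋃_{j<i} V(Hⱼ)| = ∑ᵢ |V(Hᵢ)| - |V(G)|`, so this total
overlap does not depend on the order. In the given decomposition every ear is a cycle; a cycle has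
no vertex of degree one, so it is never attached as a path ear, and each of the `m` later ears
meets its predecessors in at most one vertex. Hence the total overlap is at most `m`. In the
permuted order each of the `m` later ears meets its predecessors in at least one vertex, so each
meets them in exactly one, which is condition (E4) for a cycle ear.
-/

open Finset

lemma ncard_iUnion_add_sum_ncard_inter_prev {α : Type*} :
    ∀ {n : ℕ} (B : Fin n → Set α), (∀ i, (B i).Finite) →
      (⋃ i, B i).ncard + ∑ i, (B i ∩ ⋃ j, ⋃ (_ : j < i), B j).ncard = ∑ i, (B i).ncard
  | 0, _, _ => by simp
  | n + 1, B, hB => by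
    have hprev : ∀ i : Fin n,
        (⋃ j, ⋃ (_ : j < i.castSucc), B j) = ⋃ j, ⋃ (_ : j < i), B j.castSucc := by
      intro i
      ext x
      simp only [Set.mem_iUnion]
      constructor
      · rintro ⟨j, hj, hx⟩
        exact ⟨j.castLT (hj.trans i.castSucc_lt_last), hj, hx⟩
      · rintro ⟨j, hj, hx⟩
        exact ⟨j.castSucc, Fin.castSucc_lt_castSucc_iff.2 hj, hx⟩
    have hlast : (⋃ j, ⋃ (_ : j < Fin.last n), B j) = ⋃ j : Fin n, B j.castSucc := by
      ext x
      simp only [Set.mem_iUnion]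
      constructor
      · rintro ⟨j, hj, hx⟩
        exact ⟨j.castLT hj, hx⟩
      · rintro ⟨j, hx⟩
        exact ⟨j.castSucc, j.castSucc_lt_last, hx⟩
    have ih := ncard_iUnion_add_sum_ncard_inter_prev (fun i => B i.castSucc) (fun _ => hB _)
    have hsplit := Set.ncard_union_add_ncard_inter (⋃ j : Fin n, B j.castSucc) (B (Fin.last n))
      (Set.finite_iUnion fun _ => hB _) (hB _)
    rw [Set.inter_comm] at hsplit
    simp only [Fin.sum_univ_castSucc, hprev, hlast, Set.iUnion_fin_add_one_eq_iUnion_castSucc B,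
      Function.comp_def]
    omega

lemma sum_ncard_inter_prev_comp_perm {α : Type*} {n : ℕ} (B : Fin n → Set α)
    (hB : ∀ i, (B i).Finite) (σ : Equiv.Perm (Fin n)) :
    ∑ l, (B (σ l) ∩ ⋃ j, ⋃ (_ : j < l), B (σ j)).ncard
      = ∑ i, (B i ∩ ⋃ j, ⋃ (_ : j < i), B j).ncard := by
  have h := ncard_iUnion_add_sum_ncard_inter_prev B hB
  have hσ := ncard_iUnion_add_sum_ncard_inter_prev (fun l => B (σ l)) (fun _ => hB _)
  beta_reduce at hσ
  rw [σ.surjective.iUnion_comp B, Equiv.sum_comp σ (fun i => (B i).ncard)] at hσ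
  omega

lemma Finset.eq_one_of_one_le_of_sum_le_card {ι : Type*} {s : Finset ι} {f : ι → ℕ}
    (hpos : ∀ i ∈ s, 1 ≤ f i) (hsum : ∑ i ∈ s, f i ≤ #s) {i : ι} (hi : i ∈ s) : f i = 1 := by
  by_contra hne
  have hlt : ∑ _j ∈ s, 1 < ∑ j ∈ s, f j :=
    Finset.sum_lt_sum hpos ⟨i, hi, by have := hpos i hi; omega⟩
  rw [sum_const, smul_eq_mul, mul_one] at hlt
  omega

-- `cycleGraph 2` is a single edge, so its vertices have degree one.
lemma three_le_of_iso_cycleGraph {W : Type*} {G' : SimpleGraph W} {n : ℕ}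
    (e : G' ≃g cycleGraph n) (h3 : 3 ≤ G'.edgeSet.ncard) : 3 ≤ n := by
  have hcard : G'.edgeSet.ncard = (cycleGraph n).edgeSet.ncard := by
    rw [← Nat.card_coe_set_eq, ← Nat.card_coe_set_eq]
    exact Nat.card_congr e.mapEdgeSet
  rw [hcard] at h3
  by_contra h
  interval_cases n
  · rw [cycleGraph_zero_eq_bot, edgeSet_bot] at h3; simp at h3
  · rw [cycleGraph_one_eq_bot, edgeSet_bot] at h3; simp at h3
  · have : (cycleGraph 2).edgeSet = {s(0, 1)} := by
      rw [cycleGraph_two_eq_top, edgeSet_top]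
      ext e
      induction e with
      | _ u v => fin_cases u <;> fin_cases v <;> simp
    rw [this, Set.ncard_singleton] at h3
    omega

lemma SimpleGraph.Subgraph.ncard_neighborSet_of_iso_cycleGraph {V : Type*} {G : SimpleGraph V}
    {K : G.Subgraph} {n : ℕ} (e : K.coe ≃g cycleGraph n) (h3 : 3 ≤ K.edgeSet.ncard) {v : V}
    (hv : v ∈ K.verts) : (K.neighborSet v).ncard = 2 := by
  have hn : 3 ≤ n := three_le_of_iso_cycleGraph e <| by
    rwa [← Subgraph.image_coe_edgeSet_coe,
      Set.ncard_image_of_injective _ (Sym2.map.injective Subtype.val_injective)] at h3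
  obtain ⟨k, rfl⟩ : ∃ k, n = k + 3 := ⟨n - 3, by omega⟩
  rw [← Nat.card_coe_set_eq,
    Nat.card_congr ((Subgraph.coeNeighborSetEquiv ⟨v, hv⟩).symm.trans
      (e.mapNeighborSet ⟨v, hv⟩)),
    Nat.card_eq_fintype_card, card_neighborSet_eq_degree, cycleGraph_degree_three_le]

namespace IsEarDecomposition

variable {V : Type*} {G : SimpleGraph V} {m : ℕ} {H : Fin (m + 1) → G.Subgraph}

lemma ncard_inter_prev_le_one (hH : IsEarDecomposition G H)
    (hcyc : ∀ i, ∃ n, Nonempty ((H i).coe ≃g cycleGraph n)) (i : Fin (m + 1)) (hi : 0 < i.val) :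
    ((H i).verts ∩ ⋃ j, ⋃ (_ : j < i), (H j).verts).ncard ≤ 1 := by
  obtain ⟨-, -, hsize, -, hE4⟩ := hH
  obtain ⟨n, ⟨e⟩⟩ := hcyc i
  rcases hE4 i hi with ⟨-, hdeg⟩ | ⟨-, hone⟩
  · suffices hempty : (H i).verts ∩ ⋃ j, ⋃ (_ : j < i), (H j).verts = ∅ by simp [hempty]
    refine Set.eq_empty_of_forall_notMem fun v ⟨hv, hprev⟩ => ?_
    have h1 := (hdeg v hv).1 hprev
    rw [Subgraph.ncard_neighborSet_of_iso_cycleGraph e (hsize i).2 hv] at h1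
    omega
  · exact hone.le

lemma sum_ncard_inter_prev_le (hH : IsEarDecomposition G H)
    (hcyc : ∀ i, ∃ n, Nonempty ((H i).coe ≃g cycleGraph n)) :
    ∑ i, ((H i).verts ∩ ⋃ j, ⋃ (_ : j < i), (H j).verts).ncard ≤ m := by
  have hfirst : (⋃ j, ⋃ (_ : j < (0 : Fin (m + 1))), (H j).verts) = ∅ := by simp
  rw [Fin.sum_univ_succ, hfirst, Set.inter_empty, Set.ncard_empty, zero_add]
  calc ∑ i : Fin m, ((H i.succ).verts ∩ ⋃ j, ⋃ (_ : j < i.succ), (H j).verts).ncard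
      ≤ ∑ _i : Fin m, 1 :=
        Finset.sum_le_sum fun i _ => hH.ncard_inter_prev_le_one hcyc i.succ i.succ_pos
    _ = m := by simp

end IsEarDecomposition

theorem ear_permute_general {V : Type*} [Fintype V] (G : SimpleGraph V)
    {m : ℕ} (H : Fin (m + 1) → G.Subgraph)
    (hH : IsEarDecomposition G H)
    (hcyc : ∀ i, ∃ n, Nonempty ((H i).coe ≃g SimpleGraph.cycleGraph n))
    (σ : Equiv.Perm (Fin (m + 1)))
    (hσ : ∀ l : Fin (m + 1), 0 < l.val →
      ((H (σ l)).verts ∩ ⋃ j, ⋃ (_ : j < l), (H (σ j)).verts).Nonempty) :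
    IsEarDecomposition G (fun l => H (σ l)) := by
  set s : Fin (m + 1) → ℕ :=
    fun l => ((H (σ l)).verts ∩ ⋃ j, ⋃ (_ : j < l), (H (σ j)).verts).ncard
  have hpos (i : Fin m) : 1 ≤ s i.succ := (Set.ncard_pos (Set.toFinite _)).2 (hσ _ i.succ_pos)
  have hsum : ∑ i : Fin m, s i.succ ≤ #(univ : Finset (Fin m)) :=
    calc ∑ i : Fin m, s i.succ
        ≤ ∑ l, s l := by rw [Fin.sum_univ_succ]; exact Nat.le_add_left _ _
      _ = ∑ i, ((H i).verts ∩ ⋃ j, ⋃ (_ : j < i), (H j).verts).ncard :=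
        sum_ncard_inter_prev_comp_perm (fun i => (H i).verts) (fun _ => Set.toFinite _) σ
      _ ≤ m := hH.sum_ncard_inter_prev_le hcyc
      _ = #(univ : Finset (Fin m)) := by simp
  have hone (l : Fin (m + 1)) (hl : 0 < l.val) : s l = 1 := by
    rw [← Fin.succ_pred l (Fin.pos_iff_ne_zero.1 hl)]
    exact Finset.eq_one_of_one_le_of_sum_le_card (fun i _ => hpos i) hsum (mem_univ _)
  obtain ⟨hdisj, hcov, hodd, -, -⟩ := hH
  exact ⟨fun i j hij => hdisj (σ i) (σ j) (σ.injective.ne hij),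
    (σ.surjective.iUnion_comp fun i => (H i).verts).trans hcov, fun l => hodd (σ l),
    hcyc (σ 0), fun l hl => Or.inr ⟨hcyc (σ l), hone l hl⟩⟩

/-- Lemma 4.3: if all ears of an ear decomposition are cycles, then any permutation of the
ears in which each ear meets the union of the previous ones is again an ear decomposition. -/
theorem ear_permute {V : Type*} [Fintype V] (G : SimpleGraph V)
    (hG : G.Hypomatchable) {m : ℕ} (H : Fin (m + 1) → G.Subgraph)
    (hH : IsEarDecomposition G H)
    (hcyc : ∀ i, ∃ n, Nonempty ((H i).coe ≃g SimpleGraph.cycleGraph n))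
    (σ : Equiv.Perm (Fin (m + 1)))
    (hσ : ∀ l : Fin (m + 1), 0 < l.val →
      ((H (σ l)).verts ∩ ⋃ j, ⋃ (_ : j < l), (H (σ j)).verts).Nonempty) :
    IsEarDecomposition G (fun l => H (σ l)) :=
  ear_permute_general G H hH hcyc σ hσ
end

section
/- Let k ≥ 3 be an integer, let G be a hypomatchable graph having no {P₂,P_{2k+1}}-factor, and let 𝓗 = (H₁,…,H_m) be an ear decomposition of G. Then there is no (2k+1)-large set of indices with respect to 𝓗. -/
open SimpleGraph

/-! Every ear `H i` with `i ≠ 0` contributes the interior of a path, or a cycle minus one vertex,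
and in both cases `P_𝓗(i)` spans a path of even order in `G`, hence has a perfect matching. The
first ear is a cycle with an odd number of edges, so `|P_𝓗(0)|` is odd. Hence for `0 ∈ I` the set
`S = ⋃_{i ∈ I} P_𝓗(i)` has odd order, and if `G[S]` has a Hamiltonian path of order
`|S| ≥ 2k + 1`, its first `2k + 1` vertices form a `P_{2k+1}` while the remaining even number of
vertices, together with all `P_𝓗(i)` for `i ∉ I`, are covered by disjoint edges: a
`{P₂, P_{2k+1}}`-factor. -/

namespace SimpleGraph

variable {V : Type*} {G : SimpleGraph V}

lemma ncard_edgeSet_pathGraph (n : ℕ) : (pathGraph n).edgeSet.ncard = n - 1 := by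
  have hrange : Set.range (fun j : Fin (n - 1) ↦
      s((⟨j, by omega⟩ : Fin n), ⟨j + 1, by omega⟩)) = (pathGraph n).edgeSet := by
    ext e
    induction e using Sym2.ind with
    | _ a b =>
      simp only [Set.mem_range, mem_edgeSet, pathGraph_adj, Sym2.eq_iff, Fin.ext_iff]
      constructor
      · rintro ⟨j, h | h⟩ <;> omega
      · rintro (h | h)
        · exact ⟨⟨a, by have := b.2; omega⟩, by simp [h]⟩
        · exact ⟨⟨b, by have := a.2; omega⟩, by simp [h]⟩
  rw [← hrange, Set.ncard_range_of_injective, Nat.card_eq_fintype_card, Fintype.card_fin]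
  intro i j hij
  simp only [Sym2.eq_iff, Fin.ext_iff] at hij
  ext
  omega

lemma ncard_neighborSet_pathGraph_eq_one_iff {n : ℕ} (hn : 2 ≤ n) (a : Fin n) :
    ((pathGraph n).neighborSet a).ncard = 1 ↔ a.val = 0 ∨ a.val = n - 1 := by
  rw [Set.ncard_eq_one]
  constructor
  · rintro ⟨b, hb⟩
    by_contra! hmid
    have hlt : (⟨a + 1, by omega⟩ : Fin n) = b := by
      rw [← Set.mem_singleton_iff, ← hb, mem_neighborSet, pathGraph_adj]; simp
    have hgt : (⟨a - 1, by omega⟩ : Fin n) = b := by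
      rw [← Set.mem_singleton_iff, ← hb, mem_neighborSet, pathGraph_adj]; simp only; omega
    have := congrArg Fin.val (hlt.trans hgt.symm)
    simp only at this
    omega
  · rintro (h | h)
    · refine ⟨⟨1, by omega⟩, Set.ext fun b ↦ ?_⟩
      simp only [mem_neighborSet, pathGraph_adj, Set.mem_singleton_iff, Fin.ext_iff]
      omega
    · refine ⟨⟨n - 2, by omega⟩, Set.ext fun b ↦ ?_⟩
      simp only [mem_neighborSet, pathGraph_adj, Set.mem_singleton_iff, Fin.ext_iff]
      omega

lemma ncard_edgeSet_cycleGraph {n : ℕ} (hn : 3 ≤ n) : (cycleGraph n).edgeSet.ncard = n := by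
  obtain ⟨n, rfl⟩ : ∃ m, n = m + 3 := ⟨n - 3, by omega⟩
  have hdeg := (cycleGraph (n + 3)).sum_degrees_eq_twice_card_edges
  simp only [cycleGraph_degree_three_le, Finset.sum_const, Finset.card_univ, Fintype.card_fin,
    smul_eq_mul] at hdeg
  rw [← coe_edgeFinset, Set.ncard_coe_finset]
  omega

lemma three_le_of_three_le_ncard_edgeSet_cycleGraph {n : ℕ}
    (h : 3 ≤ (cycleGraph n).edgeSet.ncard) : 3 ≤ n := by
  by_contra! hn
  have hle := (cycleGraph n).card_edgeFinset_le_card_choose_two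
  have hchoose : (Fintype.card (Fin n)).choose 2 ≤ 1 := by
    rw [Fintype.card_fin]; interval_cases n <;> decide
  rw [← coe_edgeFinset, Set.ncard_coe_finset] at h
  omega

def pathGraph.shiftCopy {m n : ℕ} (a : ℕ) (h : a + m ≤ n) : Copy (pathGraph m) (pathGraph n) :=
  ⟨⟨fun j ↦ ⟨j + a, by omega⟩, fun {i j} hij ↦ by simp only [pathGraph_adj] at hij ⊢; omega⟩,
    fun i j hij ↦ by simpa [Fin.ext_iff] using hij⟩

@[simp]
lemma pathGraph.val_shiftCopy {m n : ℕ} (a : ℕ) (h : a + m ≤ n) (j : Fin m) :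
    (shiftCopy a h j).val = j + a :=
  rfl

lemma pathGraph.range_shiftCopy {m n : ℕ} (a : ℕ) (h : a + m ≤ n) :
    Set.range (shiftCopy a h) = {j | a ≤ j.val ∧ j.val < a + m} := by
  ext j
  simp only [Set.mem_range, Set.mem_ofPred_eq, Fin.ext_iff, val_shiftCopy]
  exact ⟨by rintro ⟨i, hi⟩; omega, fun hj ↦ ⟨⟨j - a, by omega⟩, by simp only; omega⟩⟩

def cycleGraph.rotate {n : ℕ} (c : Fin (n + 1)) : cycleGraph (n + 1) ≃g cycleGraph (n + 1) where
  toEquiv := Equiv.addRight c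
  map_rel_iff' := by
    intro u v
    simp only [cycleGraph_eq_circulantGraph, Equiv.coe_addRight, circulantGraph_adj_translate]

def cycleGraph.pathGraphCopy {n : ℕ} (c : Fin (n + 1)) : Copy (pathGraph n) (cycleGraph (n + 1)) :=
  (rotate (c + 1)).toCopy.comp
    ((Copy.ofLE _ _ pathGraph_le_cycleGraph).comp (pathGraph.shiftCopy 0 (by omega)))

lemma cycleGraph.range_pathGraphCopy {n : ℕ} (c : Fin (n + 1)) :
    Set.range (pathGraphCopy c) = {c}ᶜ := by
  ext x
  have hlast : Fin.last n + (c + 1) = c := by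
    rw [add_comm c, ← add_assoc, Fin.last_add_one, zero_add]
  simp only [pathGraphCopy, Copy.coe_comp, Set.range_comp, pathGraph.range_shiftCopy,
    Set.mem_image, Set.mem_ofPred_eq, Set.mem_compl_singleton_iff]
  constructor
  · rintro ⟨_, ⟨j, ⟨-, hj⟩, rfl⟩, rfl⟩ hc
    have : j = Fin.last n := add_right_cancel (hc.trans hlast.symm)
    simp [this] at hj
  · intro hx
    refine ⟨x - (c + 1), ⟨x - (c + 1), ⟨Nat.zero_le _, ?_⟩, rfl⟩, sub_add_cancel x (c + 1)⟩
    by_contra! hn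
    have : x - (c + 1) = Fin.last n := Fin.ext (by simp only [Fin.val_last]; omega)
    exact hx (by rw [← hlast, ← this, sub_add_cancel])

lemma Copy.ncard_range_pathGraph {n : ℕ} (f : Copy (pathGraph n) G) :
    (Set.range f).ncard = n := by
  rw [← Copy.coe_toHom, Set.ncard_range_of_injective f.injective, Nat.card_eq_fintype_card,
    Fintype.card_fin]

lemma pathGraph.exists_isPerfectMatching (r : ℕ) :
    ∃ M : (pathGraph (2 * r)).Subgraph, M.IsPerfectMatching := by
  refine ⟨{ verts := Set.univ
            Adj := fun a b ↦ a.val / 2 = b.val / 2 ∧ a ≠ b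
            adj_sub := fun {a b} h ↦ by
              rw [pathGraph_adj]; rw [Ne, Fin.ext_iff] at h; omega
            edge_vert := fun _ ↦ Set.mem_univ _
            symm := ⟨fun a b h ↦ ⟨h.1.symm, h.2.symm⟩⟩ }, ?_⟩
  rw [Subgraph.isPerfectMatching_iff]
  intro a
  refine ⟨⟨a.val + 1 - 2 * (a.val % 2), by omega⟩, ?_, ?_⟩
  · simp only [Ne, Fin.ext_iff]; omega
  · rintro b ⟨h1, h2⟩
    rw [Ne, Fin.ext_iff] at h2
    ext; simp only; omega

lemma Copy.exists_isMatching_verts_eq_range {r : ℕ} (f : Copy (pathGraph (2 * r)) G) :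
    ∃ M : G.Subgraph, M.IsMatching ∧ M.verts = Set.range f := by
  obtain ⟨M, hM⟩ := pathGraph.exists_isPerfectMatching r
  refine ⟨M.map f.toHom, hM.1.map f.toHom f.injective, ?_⟩
  simp [hM.2.verts_eq_univ, Set.image_univ]

lemma Iso.ncard_edgeSet_eq {α β : Type*} {A : SimpleGraph α} {B : SimpleGraph β} (e : A ≃g B) :
    A.edgeSet.ncard = B.edgeSet.ncard := by
  rw [← Nat.card_coe_set_eq, ← Nat.card_coe_set_eq]
  exact Nat.card_congr e.mapEdgeSet

lemma Subgraph.ncard_edgeSet_coe (K : G.Subgraph) : K.coe.edgeSet.ncard = K.edgeSet.ncard := by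
  rw [← K.image_coe_edgeSet_coe]
  exact (Set.ncard_image_of_injective _ (Sym2.map.injective Subtype.val_injective)).symm

lemma Subgraph.ncard_verts_of_iso {n : ℕ} (K : G.Subgraph) {B : SimpleGraph (Fin n)}
    (e : K.coe ≃g B) : K.verts.ncard = n := by
  rw [← Nat.card_coe_set_eq, Nat.card_congr e.toEquiv, Nat.card_eq_fintype_card, Fintype.card_fin]

lemma Subgraph.ncard_neighborSet_of_iso {β : Type*} {B : SimpleGraph β} (K : G.Subgraph)
    (e : K.coe ≃g B) (v : K.verts) : (K.neighborSet v).ncard = (B.neighborSet (e v)).ncard := by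
  rw [← Nat.card_coe_set_eq, ← Nat.card_coe_set_eq]
  exact Nat.card_congr ((K.coeNeighborSetEquiv v).symm.trans (e.mapNeighborSet _))

lemma Subgraph.odd_ncard_verts_of_iso_cycleGraph {n : ℕ} (K : G.Subgraph)
    (ψ : K.coe ≃g cycleGraph n) (hodd : Odd K.edgeSet.ncard) (h3 : 3 ≤ K.edgeSet.ncard) :
    Odd K.verts.ncard := by
  rw [← K.ncard_edgeSet_coe, ψ.ncard_edgeSet_eq] at hodd h3
  rwa [K.ncard_verts_of_iso ψ, ← ncard_edgeSet_cycleGraph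
    (three_le_of_three_le_ncard_edgeSet_cycleGraph h3)]

lemma Subgraph.exists_copy_pathGraph_range_eq_sdiff_of_iso_pathGraph {n : ℕ} (K : G.Subgraph)
    (A : Set V) (φ : K.coe ≃g pathGraph n)
    (hA : ∀ v ∈ K.verts, v ∈ A ↔ (K.neighborSet v).ncard = 1)
    (hodd : Odd K.edgeSet.ncard) (h3 : 3 ≤ K.edgeSet.ncard) :
    ∃ r, ∃ f : Copy (pathGraph (2 * r)) G, Set.range f = K.verts \ A := by
  rw [← K.ncard_edgeSet_coe, φ.ncard_edgeSet_eq, ncard_edgeSet_pathGraph] at hodd h3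
  obtain ⟨r, hr⟩ := hodd
  have hend : ∀ a : K.verts, (a : V) ∈ A ↔ (φ a).val = 0 ∨ (φ a).val = n - 1 := fun a ↦ by
    rw [hA a a.2, K.ncard_neighborSet_of_iso φ, ncard_neighborSet_pathGraph_eq_one_iff (by omega)]
  refine ⟨r, K.coeCopy.comp (φ.symm.toCopy.comp (pathGraph.shiftCopy 1 (by omega))), ?_⟩
  ext x
  simp only [Copy.coe_comp, Set.range_comp, pathGraph.range_shiftCopy]
  constructor
  · rintro ⟨_, ⟨j, hj, rfl⟩, rfl⟩
    refine ⟨(φ.symm j).2, fun hx ↦ ?_⟩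
    have := (hend (φ.symm j)).mp hx
    rw [RelIso.apply_symm_apply] at this
    simp only [Set.mem_ofPred_eq] at hj
    omega
  · rintro ⟨hx, hxA⟩
    rw [hend ⟨x, hx⟩] at hxA
    have := (φ ⟨x, hx⟩).2
    refine ⟨_, ⟨φ ⟨x, hx⟩, ⟨by omega, by omega⟩, rfl⟩, ?_⟩
    exact congrArg Subtype.val (φ.symm_apply_apply ⟨x, hx⟩)

lemma Subgraph.exists_copy_pathGraph_range_eq_sdiff_of_iso_cycleGraph {n : ℕ} (K : G.Subgraph)
    (A : Set V) (ψ : K.coe ≃g cycleGraph n) (hA : (K.verts ∩ A).ncard = 1)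
    (hodd : Odd K.edgeSet.ncard) (h3 : 3 ≤ K.edgeSet.ncard) :
    ∃ r, ∃ f : Copy (pathGraph (2 * r)) G, Set.range f = K.verts \ A := by
  rw [← K.ncard_edgeSet_coe, ψ.ncard_edgeSet_eq] at hodd h3
  rw [ncard_edgeSet_cycleGraph (three_le_of_three_le_ncard_edgeSet_cycleGraph h3)] at hodd
  obtain ⟨r, rfl⟩ := hodd
  obtain ⟨v, hv⟩ := Set.ncard_eq_one.mp hA
  have hvK : v ∈ K.verts := (hv ▸ Set.mem_singleton v : v ∈ K.verts ∩ A).1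
  refine ⟨r, K.coeCopy.comp (ψ.symm.toCopy.comp (cycleGraph.pathGraphCopy (ψ ⟨v, hvK⟩))), ?_⟩
  ext x
  simp only [Copy.coe_comp, Set.range_comp, cycleGraph.range_pathGraphCopy]
  constructor
  · rintro ⟨_, ⟨j, hj, rfl⟩, rfl⟩
    refine ⟨(ψ.symm j).2, fun hjA ↦ hj ?_⟩
    have hjv : (ψ.symm j : V) ∈ K.verts ∩ A := ⟨(ψ.symm j).2, hjA⟩
    rw [hv, Set.mem_singleton_iff] at hjv
    have : ψ.symm j = ⟨v, hvK⟩ := Subtype.ext hjv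
    rw [Set.mem_singleton_iff, ← this, RelIso.apply_symm_apply]
  · rintro ⟨hx, hxA⟩
    refine ⟨_, ⟨ψ ⟨x, hx⟩, ?_, rfl⟩, congrArg Subtype.val (ψ.symm_apply_apply ⟨x, hx⟩)⟩
    rw [Set.mem_compl_singleton_iff, ne_eq, EmbeddingLike.apply_eq_iff_eq, Subtype.mk.injEq]
    rintro rfl
    exact hxA (hv ▸ Set.mem_singleton x : x ∈ K.verts ∩ A).2

lemma Walk.IsHamiltonian.exists_copy_pathGraph_range_eq [DecidableEq V] {s : Set V} {u w : s}
    {p : (G.induce s).Walk u w} (hp : p.IsPath) (hham : p.IsHamiltonian) :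
    ∃ f : Copy (pathGraph s.ncard) G, Set.range f = s := by
  let f := (Copy.induce G s).comp hp.pathGraphCopy
  have hf : Set.range f = s := by
    ext x
    refine ⟨by rintro ⟨j, rfl⟩; exact (hp.pathGraphCopy j).2, fun hx ↦ ?_⟩
    obtain ⟨j, hj⟩ := hp.pathGraphIsoToSubgraph.surjective
      ⟨⟨x, hx⟩, p.mem_verts_toSubgraph.mpr (hham.mem_support _)⟩
    exact ⟨j, congrArg (fun y ↦ y.val.val) hj⟩
  have hlen : p.length + 1 = s.ncard := by rw [← f.ncard_range_pathGraph, hf]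
  exact hlen ▸ ⟨f, hf⟩

lemma hasPathFactor_of_forall_exists_subgraph {ns : Set ℕ} (F : SimpleGraph V) (hFG : F ≤ G)
    (h : ∀ v, ∃ K : G.Subgraph, v ∈ K.verts ∧ (∀ x ∈ K.verts, ∀ y, F.Adj x y ↔ K.Adj x y) ∧
      ∃ n ∈ ns, Nonempty (K.coe ≃g pathGraph n)) :
    G.HasPathFactor ns := by
  refine ⟨F, hFG, fun C ↦ ?_⟩
  refine C.ind fun v ↦ ?_
  obtain ⟨K, hv, hK, n, hn, ⟨φ⟩⟩ := h v
  have hclosed : ∀ {a b}, F.Walk a b → a ∈ K.verts → b ∈ K.verts := by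
    intro a b p
    induction p with
    | nil => exact id
    | cons hab _ ih => exact fun ha ↦ ih (K.edge_vert ((hK _ ha _).mp hab).symm)
  have hsupp : (F.connectedComponentMk v).supp = K.verts := by
    ext x
    rw [ConnectedComponent.mem_supp_iff, ConnectedComponent.eq]
    refine ⟨fun hxv ↦ hclosed hxv.some.reverse hv, fun hx ↦ ?_⟩
    have hpre : K.coe.Preconnected := φ.preconnected_iff.mpr (pathGraph_preconnected n)
    exact (hpre ⟨x, hx⟩ ⟨v, hv⟩).map ⟨Subtype.val, fun {a b} hab ↦ (hK a a.2 b).mpr hab⟩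
  refine ⟨n, hn, ⟨?_⟩⟩
  rw [hsupp]
  exact .trans ⟨.refl _, fun {a b} ↦ (hK a a.2 b).symm⟩ φ

lemma hasPathFactor_of_copy_pathGraph_of_isMatching {n : ℕ} (f : Copy (pathGraph n) G)
    {M : G.Subgraph} (hM : M.IsMatching) (hfM : IsCompl (Set.range f) M.verts) :
    G.HasPathFactor {2, n} := by
  classical
  have hP : f.toSubgraph.verts = Set.range f := by simp [Set.image_univ]
  refine hasPathFactor_of_forall_exists_subgraph (f.toSubgraph ⊔ M).spanningCoe
    (Subgraph.spanningCoe_le _) fun v ↦ ?_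
  by_cases hv : v ∈ Set.range f
  · refine ⟨f.toSubgraph, hP ▸ hv, fun x hx y ↦ ?_, n, by simp, ⟨f.isoToSubgraph.symm⟩⟩
    rw [Subgraph.spanningCoe_adj, Subgraph.sup_adj]
    exact or_iff_left fun hxy ↦ hfM.disjoint.ne_of_mem (hP ▸ hx) (M.edge_vert hxy) rfl
  · have hvM : v ∈ M.verts := hfM.compl_eq ▸ (hv : v ∈ (Set.range f)ᶜ)
    obtain ⟨w, hvw, -⟩ := hM hvM
    have hG := M.adj_sub hvw
    refine ⟨G.subgraphOfAdj hG, by simp, fun x hx y ↦ ?_, 2, by simp, ⟨?_⟩⟩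
    · have hxM : x ∈ M.verts := by
        rcases hx with rfl | rfl
        exacts [hvM, M.edge_vert hvw.symm]
      rw [Subgraph.spanningCoe_adj, Subgraph.sup_adj, subgraphOfAdj_adj,
        or_iff_right fun hxy ↦ hfM.disjoint.ne_of_mem (hP ▸ f.toSubgraph.edge_vert hxy) hxM rfl]
      constructor
      · intro hxy
        rcases hx with rfl | rfl
        · rw [hM.eq_of_adj_left hvw hxy]
        · rw [hM.eq_of_adj_left hvw.symm hxy, Sym2.eq_swap]
      · rw [Sym2.eq_iff]
        rintro (⟨rfl, rfl⟩ | ⟨rfl, rfl⟩)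
        exacts [hvw, hvw.symm]
    · rw [← hG.toSubgraph_toWalk]
      exact (hG.isPath_toWalk).pathGraphIsoToSubgraph.symm

lemma hasPathFactor_of_copy_pathGraph_of_isMatching_compl {N n : ℕ} (hnN : n ≤ N)
    (hpar : Even (N - n)) (f : Copy (pathGraph N) G) {M : G.Subgraph} (hM : M.IsMatching)
    (hfM : IsCompl (Set.range f) M.verts) :
    G.HasPathFactor {2, n} := by
  obtain ⟨r, hr⟩ := hpar
  let head := f.comp (pathGraph.shiftCopy 0 (m := n) (by omega))
  let tail := f.comp (pathGraph.shiftCopy n (m := 2 * r) (by omega))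
  obtain ⟨Mt, hMt, hMtv⟩ := tail.exists_isMatching_verts_eq_range
  have hMt_compl : Mt.verts ⊆ (M.verts)ᶜ := by
    rw [hMtv, ← hfM.compl_eq, compl_compl, Copy.coe_comp]
    exact Set.range_comp_subset_range _ _
  refine hasPathFactor_of_copy_pathGraph_of_isMatching head (hMt.sup hM ?_) ?_
  · rw [hMt.support_eq_verts, hM.support_eq_verts]
    exact Set.subset_compl_iff_disjoint_right.mp hMt_compl
  · suffices h : (Mt ⊔ M).verts = (Set.range head)ᶜ from h ▸ isCompl_compl
    rw [Subgraph.verts_sup, hMtv, ← hfM.compl_eq]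
    ext x
    by_cases hx : x ∈ Set.range f
    · obtain ⟨j, rfl⟩ := hx
      have hf : Function.Injective f := f.injective
      simp only [head, tail, Copy.coe_comp, Set.range_comp, pathGraph.range_shiftCopy,
        Set.mem_union, Set.mem_compl_iff, hf.mem_set_image, Set.mem_range_self, Set.mem_ofPred_eq,
        not_true_eq_false, or_false]
      omega
    · have hhead : x ∉ Set.range head := fun ⟨j, hj⟩ ↦ hx ⟨_, hj⟩
      simp [hx, hhead]

end SimpleGraph

section EarDecomposition

variable {V : Type*} {G : SimpleGraph V} {m : ℕ}

lemma earPV_eq_disjointed (H : Fin (m + 1) → G.Subgraph) :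
    earPV H = disjointed fun i ↦ (H i).verts := by
  ext i x
  simp [earPV, disjointed_apply]

open scoped Function in
lemma pairwise_disjoint_earPV (H : Fin (m + 1) → G.Subgraph) : Pairwise (Disjoint on (earPV H)) :=
  earPV_eq_disjointed H ▸ disjoint_disjointed _

lemma iUnion_earPV (H : Fin (m + 1) → G.Subgraph) : ⋃ i, earPV H i = ⋃ i, (H i).verts :=
  earPV_eq_disjointed H ▸ iUnion_disjointed

lemma earPV_zero (H : Fin (m + 1) → G.Subgraph) : earPV H 0 = (H 0).verts := by
  simp [earPV]

lemma ncard_biUnion_earPV [Finite V] (H : Fin (m + 1) → G.Subgraph) (I : Finset (Fin (m + 1))) :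
    (⋃ i ∈ I, earPV H i).ncard = ∑ i ∈ I, (earPV H i).ncard := by
  rw [← finsum_mem_coe_finset, ← I.finite_toSet.ncard_biUnion (fun _ _ ↦ Set.toFinite _)
    ((pairwise_disjoint_earPV H).set_pairwise _)]
  simp

end EarDecomposition

namespace IsEarDecomposition

variable {V : Type*} {G : SimpleGraph V} {m : ℕ} {H : Fin (m + 1) → G.Subgraph}

lemma existsUnique_mem_earPV (hH : IsEarDecomposition G H) (x : V) : ∃! i, x ∈ earPV H i := by
  have hx : x ∈ ⋃ i, earPV H i := by rw [iUnion_earPV, hH.2.1]; trivial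
  obtain ⟨i, hi⟩ := Set.mem_iUnion.mp hx
  exact ⟨i, hi, fun j hj ↦ by_contra fun hji ↦
    (pairwise_disjoint_earPV H hji).ne_of_mem hj hi rfl⟩

lemma odd_ncard_earPV_zero (hH : IsEarDecomposition G H) : Odd (earPV H 0).ncard := by
  obtain ⟨-, -, hodd3, ⟨n, ⟨ψ⟩⟩, -⟩ := hH
  rw [earPV_zero]
  exact (H 0).odd_ncard_verts_of_iso_cycleGraph ψ (hodd3 0).1 (hodd3 0).2

lemma exists_copy_pathGraph_range_eq_earPV (hH : IsEarDecomposition G H) {i : Fin (m + 1)}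
    (hi : i ≠ 0) : ∃ r, ∃ f : Copy (pathGraph (2 * r)) G, Set.range f = earPV H i := by
  obtain ⟨-, -, hodd3, -, hears⟩ := hH
  rcases hears i (Fin.pos_iff_ne_zero.mpr hi) with ⟨⟨n, ⟨φ⟩⟩, hdeg⟩ | ⟨⟨n, ⟨ψ⟩⟩, hone⟩
  · exact (H i).exists_copy_pathGraph_range_eq_sdiff_of_iso_pathGraph _ φ hdeg (hodd3 i).1
      (hodd3 i).2
  · exact (H i).exists_copy_pathGraph_range_eq_sdiff_of_iso_cycleGraph _ ψ hone (hodd3 i).1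
      (hodd3 i).2

lemma even_ncard_earPV (hH : IsEarDecomposition G H) {i : Fin (m + 1)} (hi : i ≠ 0) :
    Even (earPV H i).ncard := by
  obtain ⟨r, f, hf⟩ := hH.exists_copy_pathGraph_range_eq_earPV hi
  rw [← hf, f.ncard_range_pathGraph]
  exact even_two_mul r

lemma odd_ncard_biUnion_earPV [Finite V] (hH : IsEarDecomposition G H) {I : Finset (Fin (m + 1))}
    (hI : 0 ∈ I) : Odd (⋃ i ∈ I, earPV H i).ncard := by
  rw [ncard_biUnion_earPV, ← Finset.add_sum_erase I _ hI]
  exact hH.odd_ncard_earPV_zero.add_even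
    (Finset.even_sum _ fun i hi ↦ hH.even_ncard_earPV (Finset.ne_of_mem_erase hi))

lemma exists_isMatching_verts_eq_compl_biUnion_earPV (hH : IsEarDecomposition G H)
    {I : Finset (Fin (m + 1))} (hI : 0 ∈ I) :
    ∃ M : G.Subgraph, M.IsMatching ∧ M.verts = (⋃ i ∈ I, earPV H i)ᶜ := by
  have hears : ∀ i : {i // i ∉ I}, ∃ M : G.Subgraph, M.IsMatching ∧ M.verts = earPV H i := by
    rintro ⟨i, hi⟩
    obtain ⟨r, f, hf⟩ := hH.exists_copy_pathGraph_range_eq_earPV (ne_of_mem_of_not_mem hI hi).symm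
    exact hf ▸ f.exists_isMatching_verts_eq_range
  choose M hM hMv using hears
  refine ⟨⨆ i, M i, Subgraph.IsMatching.iSup hM fun i j hij ↦ ?_, ?_⟩
  · show Disjoint (M i).support (M j).support
    rw [(hM i).support_eq_verts, (hM j).support_eq_verts, hMv, hMv]
    exact pairwise_disjoint_earPV H (Subtype.coe_injective.ne hij)
  · ext x
    obtain ⟨j, hj, hjuniq⟩ := hH.existsUnique_mem_earPV x
    simp only [Subgraph.verts_iSup, hMv, Set.mem_iUnion, Set.mem_compl_iff, not_exists]
    refine ⟨fun ⟨⟨i, hiI⟩, hi⟩ k hkI hk ↦ ?_, fun h ↦ ⟨⟨j, fun hjI ↦ h j hjI hj⟩, hj⟩⟩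
    exact hiI (hjuniq i hi ▸ hjuniq k hk ▸ hkI)

end IsEarDecomposition

theorem no_large_set_general {V : Type*} [Fintype V] [DecidableEq V] (k : ℕ)
    (G : SimpleGraph V)
    (hfac : ¬ G.HasPathFactor {2, 2 * k + 1})
    {m : ℕ} (H : Fin (m + 1) → G.Subgraph) (hH : IsEarDecomposition G H) :
    ¬ ∃ I : Finset (Fin (m + 1)),
        0 ∈ I ∧
        2 * k + 1 ≤ ∑ i ∈ I, (earPV H i).ncard ∧
        ∃ (u w : ↥(⋃ i ∈ I, earPV H i))
          (p : (G.induce (⋃ i ∈ I, earPV H i)).Walk u w),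
          p.IsPath ∧ p.IsHamiltonian := by
  rintro ⟨I, hI0, hsum, u, w, p, hpath, hham⟩
  obtain ⟨f, hf⟩ := hham.exists_copy_pathGraph_range_eq hpath
  obtain ⟨M, hM, hMv⟩ := hH.exists_isMatching_verts_eq_compl_biUnion_earPV hI0
  refine hfac (hasPathFactor_of_copy_pathGraph_of_isMatching_compl ?_ ?_ f hM ?_)
  · rwa [ncard_biUnion_earPV]
  · exact Nat.Odd.sub_odd (hH.odd_ncard_biUnion_earPV hI0) (odd_two_mul_add_one k)
  · rw [hf, hMv]
    exact isCompl_compl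

/-- Lemma 4.4: if `k ≥ 3` and the hypomatchable graph `G` has no `{P₂, P_{2k+1}}`-factor,
then there is no `(2k+1)`-large index set with respect to the ear decomposition `H`, i.e.
no set `I` of indices containing `0` with `∑_{i ∈ I} |V(P_𝓗(i))| ≥ 2k+1` such that the
subgraph of `G` induced by `⋃_{i ∈ I} V(P_𝓗(i))` has a spanning (Hamiltonian) path. -/
theorem no_large_set {V : Type*} [Fintype V] [DecidableEq V] (k : ℕ) (hk : 3 ≤ k)
    (G : SimpleGraph V) (hG : G.Hypomatchable)
    (hfac : ¬ G.HasPathFactor {2, 2 * k + 1})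
    {m : ℕ} (H : Fin (m + 1) → G.Subgraph) (hH : IsEarDecomposition G H) :
    ¬ ∃ I : Finset (Fin (m + 1)),
        0 ∈ I ∧
        2 * k + 1 ≤ ∑ i ∈ I, (earPV H i).ncard ∧
        ∃ (u w : ↥(⋃ i ∈ I, earPV H i))
          (p : (G.induce (⋃ i ∈ I, earPV H i)).Walk u w),
          p.IsPath ∧ p.IsHamiltonian :=
  no_large_set_general k G hfac H hH
end

section
/- Let G be a hypomatchable graph, let v be a vertex of G, and let M be a perfect matching of G−v. Then for each vertex w of G, G contains a path Q of odd order connecting v and w that is an alternating path with respect to (v,M), such that M − E(Q) is a perfect matching of G − V(Q). -/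
open SimpleGraph

/-!
Take a perfect matching `M'` of `G − w` and walk from `v` alternately along an `M'`-edge and an
`M`-edge. Because both are matchings and `M` misses only `v`, every step reaches a new vertex, and
the walk can only stop where `M'` has no edge, that is at `w`; by finiteness it gets there after an
even number of steps. Every vertex of the resulting path other than `v` is matched by `M` along
the path, so the remaining edges of `M` form a perfect matching of `G − V(Q)`.
-/

namespace SimpleGraph

variable {V : Type*} {G : SimpleGraph V} {M : Set (Sym2 V)} {s : Set V}

namespace IsPerfectMatchingOn

lemma mem_of_mk_mem (hM : G.IsPerfectMatchingOn M s) {a b : V} (h : s(a, b) ∈ M) : a ∈ s :=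
  hM.2.1 _ h a (Sym2.mem_mk_left a b)

lemma eq_of_mk_mem (hM : G.IsPerfectMatchingOn M s) {a b c : V} (hb : s(a, b) ∈ M)
    (hc : s(a, c) ∈ M) : b = c := by
  obtain ⟨e, -, he⟩ := hM.2.2 a (hM.mem_of_mk_mem hb)
  have hbc : s(a, b) = s(a, c) :=
    (he _ ⟨hb, Sym2.mem_mk_left a b⟩).trans (he _ ⟨hc, Sym2.mem_mk_left a c⟩).symm
  exact Sym2.congr_right.mp hbc

lemma exists_mk_mem (hM : G.IsPerfectMatchingOn M s) {a : V} (ha : a ∈ s) :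
    ∃ b, G.Adj a b ∧ s(a, b) ∈ M := by
  obtain ⟨e, ⟨heM, hae⟩, -⟩ := hM.2.2 a ha
  obtain ⟨b, rfl⟩ := Sym2.mem_iff_exists.mp hae
  exact ⟨b, hM.1 heM, heM⟩

lemma diff (hM : G.IsPerfectMatchingOn M s) {E : Set (Sym2 V)} {S : Set V}
    (hES : ∀ e ∈ E, ∀ x ∈ e, x ∈ S) (hSE : ∀ x ∈ S, x ∈ s → ∃ e ∈ E, e ∈ M ∧ x ∈ e) :
    G.IsPerfectMatchingOn (M \ E) (s \ S) := by
  refine ⟨fun e he ↦ hM.1 he.1, ?_, ?_⟩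
  · rintro e ⟨heM, heE⟩ x hxe
    refine ⟨hM.2.1 e heM x hxe, fun hxS ↦ heE ?_⟩
    obtain ⟨f, hfE, hfM, hxf⟩ := hSE x hxS (hM.2.1 e heM x hxe)
    obtain ⟨g, -, hg⟩ := hM.2.2 x (hM.2.1 e heM x hxe)
    rwa [hg e ⟨heM, hxe⟩, ← hg f ⟨hfM, hxf⟩]
  · rintro x ⟨hxs, hxS⟩
    obtain ⟨e, ⟨heM, hxe⟩, he⟩ := hM.2.2 x hxs
    exact ⟨e, ⟨⟨heM, fun heE ↦ hxS (hES e heE x hxe)⟩, hxe⟩,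
      fun f ⟨⟨hfM, _⟩, hxf⟩ ↦ he f ⟨hfM, hxf⟩⟩

end IsPerfectMatchingOn

namespace Walk

variable {a u x : V}

lemma getVert_concat (p : G.Walk a u) (h : G.Adj u x) (i : ℕ) :
    (p.concat h).getVert i = if i ≤ p.length then p.getVert i else x := by
  rw [concat_eq_append, getVert_append']
  split_ifs with hi
  · rfl
  · rw [getVert_of_length_le _ (by simp; omega)]

def Alternates (A B : Set (Sym2 V)) (p : G.Walk a u) : Prop :=
  ∀ i < p.length, s(p.getVert i, p.getVert (i + 1)) ∈ if Even i then A else B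

lemma Alternates.concat {A B : Set (Sym2 V)} {p : G.Walk a u} (hp : p.Alternates A B)
    (h : G.Adj u x) (hx : s(u, x) ∈ if Even p.length then A else B) :
    (p.concat h).Alternates A B := by
  intro i hi
  rw [length_concat] at hi
  rw [getVert_concat, getVert_concat]
  rcases Nat.lt_succ_iff_lt_or_eq.mp hi with hi | rfl
  · simpa [hi.le, Nat.succ_le_of_lt hi] using hp i hi
  · simpa [getVert_length] using hx

lemma IsPath.not_mem_support_of_mk_mem {C : Set (Sym2 V)} {p : G.Walk a u} (hp : p.IsPath)
    (hC : G.IsPerfectMatchingOn C s)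
    (hpC : ∀ i < p.length, (Even i ↔ Even p.length) → s(p.getVert i, p.getVert (i + 1)) ∈ C)
    (ha : Odd p.length → a ∉ s) (hux : u ≠ x) (hx : s(u, x) ∈ C) : x ∉ p.support := by
  intro hxp
  obtain ⟨i, rfl, hi⟩ := mem_support_iff_exists_getVert.mp hxp
  have hend : ∀ j ≤ p.length, p.getVert j = u → j = p.length := fun j hj hju ↦
    hp.getVert_injOn hj (Set.mem_ofPred.mpr le_rfl) (hju.trans p.getVert_length.symm)
  have hi : i < p.length := lt_of_le_of_ne hi fun h ↦ hux (h ▸ p.getVert_length).symm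
  have hxC : s(p.getVert i, u) ∈ C := Sym2.eq_swap ▸ hx
  by_cases hpar : Even i ↔ Even p.length
  · -- the `C`-edge at `p.getVert i` leads forward, so `u` would come right after it
    have := hend _ hi (hC.eq_of_mk_mem (hpC i hi hpar) hxC)
    rw [← this, Nat.even_add_one] at hpar
    tauto
  · rcases Nat.eq_zero_or_pos i with rfl | hi0
    · exact ha (by simpa using hpar) (p.getVert_zero ▸ hC.mem_of_mk_mem hxC)
    · -- the `C`-edge at `p.getVert i` leads backward, so `u` would come before it
      have hprev := hpC (i - 1) (by omega) (by
        rw [Nat.even_sub hi0, iff_false_intro Nat.not_even_one, iff_false]; tauto)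
      rw [Nat.sub_add_cancel hi0, Sym2.eq_swap] at hprev
      have := hend _ (by omega) (hC.eq_of_mk_mem hprev hxC)
      omega

lemma Alternates.exists_mem_edges {A B : Set (Sym2 V)} {p : G.Walk a u} (halt : p.Alternates A B)
    (hev : Even p.length) (hx : x ∈ p.support) (hxa : x ≠ a) : ∃ e ∈ p.edges, e ∈ B ∧ x ∈ e := by
  obtain ⟨i, rfl, hi⟩ := mem_support_iff_exists_getVert.mp hx
  have hi0 : i ≠ 0 := by rintro rfl; exact hxa p.getVert_zero
  by_cases hie : Even i
  · have hB := halt (i - 1) (by omega)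
    rw [if_neg (by rw [Nat.even_sub (by omega)]; simp [hie])] at hB
    refine ⟨_, p.mk_mem_edges_iff_exists.mpr ⟨i - 1, by omega, rfl⟩, hB, ?_⟩
    rw [Nat.sub_add_cancel (by omega)]
    exact Sym2.mem_mk_right _ _
  · have hi : i < p.length := lt_of_le_of_ne hi (by rintro rfl; exact hie hev)
    have hB := halt i hi
    rw [if_neg hie] at hB
    exact ⟨_, p.mk_mem_edges_iff_exists.mpr ⟨i, hi, rfl⟩, hB, Sym2.mem_mk_left _ _⟩

end Walk

theorem exists_isPath_alternates_to [Fintype V] {v w : V} {M' : Set (Sym2 V)}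
    (hM : G.IsPerfectMatchingOn M {v}ᶜ)
    (hM' : G.IsPerfectMatchingOn M' {w}ᶜ) {u : V} (p : G.Walk v u) (hp : p.IsPath)
    (hev : Even p.length) (halt : p.Alternates M' M) :
    ∃ q : G.Walk v w, q.IsPath ∧ Even q.length ∧ q.Alternates M' M := by
  by_cases huw : u = w
  · subst huw
    exact ⟨p, hp, hev, halt⟩
  obtain ⟨x, hux, hx⟩ := hM'.exists_mk_mem (a := u) huw
  have hxp : x ∉ p.support := hp.not_mem_support_of_mk_mem hM'
    (fun i hi hpar ↦ by simpa [hpar.mpr hev] using halt i hi)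
    (fun h ↦ absurd hev (Nat.not_even_iff_odd.mpr h)) hux.ne hx
  have hp₁ : (p.concat hux).IsPath := hp.concat hxp hux
  have halt₁ : (p.concat hux).Alternates M' M := halt.concat hux (by simpa [hev] using hx)
  have hodd₁ : ¬Even (p.concat hux).length := by simpa [Nat.even_add_one] using hev
  obtain ⟨y, hxy, hy⟩ := hM.exists_mk_mem (a := x) fun h : x = v ↦ hxp (h ▸ p.start_mem_support)
  have hyp : y ∉ (p.concat hux).support := hp₁.not_mem_support_of_mk_mem hM
    (fun i hi hpar ↦ by simpa [hpar.not.mpr hodd₁] using halt₁ i hi) (fun _ ↦ by simp) hxy.ne hy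
  have hp₂ := hp₁.concat hyp hxy
  have hlen := hp₂.length_lt
  exact exists_isPath_alternates_to hM hM' _ hp₂
    (by simpa [Nat.even_add_one] using hodd₁)
    (halt₁.concat hxy (by simpa [Nat.even_add_one, hev] using hy))
termination_by Fintype.card V - p.length
decreasing_by simp only [Walk.length_concat] at hlen ⊢; omega

end SimpleGraph

/-- Lemma 4.9: if `G` is hypomatchable, `M` is a perfect matching of `G − v`, and `w` is
any vertex, then `G` contains an alternating path `Q` of odd order from `v` to `w`
(i.e. its edges at odd positions belong to `M`) such that `M − E(Q)` is a perfect
matching of `G − V(Q)`. -/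
theorem alternating_path_to {V : Type*} [Fintype V] (G : SimpleGraph V)
    (hG : G.Hypomatchable) (v : V) (M : Set (Sym2 V))
    (hM : G.IsPerfectMatchingOn M {v}ᶜ) (w : V) :
    ∃ p : G.Walk v w, p.IsPath ∧ Odd p.support.length ∧
      (∀ (j : ℕ) (h : j < p.edges.length), Odd j → p.edges.get ⟨j, h⟩ ∈ M) ∧
      G.IsPerfectMatchingOn (M \ {e | e ∈ p.edges}) {x | x ∉ p.support} := by
  obtain ⟨M', hM'⟩ := hG w
  obtain ⟨p, hp, hev, halt⟩ := exists_isPath_alternates_to hM hM' Walk.nil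
    Walk.IsPath.nil Even.zero fun i hi ↦ absurd hi (Nat.not_lt_zero i)
  refine ⟨p, hp, by simpa [Walk.length_support] using hev.add_one, fun j hj hodd ↦ ?_, ?_⟩
  · simpa [Walk.getElem_edges, Nat.not_even_iff_odd.mpr hodd] using halt j (by simpa using hj)
  · have hcompl : {x | x ∉ p.support} = ({v}ᶜ : Set V) \ {x | x ∈ p.support} := by
      ext x
      simpa using fun hx (hxv : x = v) ↦ hx (hxv ▸ p.start_mem_support)
    rw [hcompl]
    exact hM.diff (fun e he x hx ↦ Walk.mem_support_of_mem_edges he hx)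
      fun x hx hxv ↦ halt.exists_mem_edges hev hx hxv
end

section
/- Let G be a hypomatchable graph with |V(G)| ≥ 5, let v be a vertex of G, and let M be a perfect matching of G−v. Suppose that if G is isomorphic to K₁ + sK₂ for some s ≥ 2, then v is not the unique cutvertex of G. Then G contains a path Q of odd order with |V(Q)| ≥ 5 having v as one of its endvertices, which is an alternating path with respect to (v,M), such that M − E(Q) is a perfect matching of G − V(Q). -/
open SimpleGraph

/-- The graph `K₁ + sK₂`: `s` disjoint edges together with one extra vertex (`none`, its
unique cutvertex) joined to all other vertices. -/
def K1sK2 (s : ℕ) : SimpleGraph (Option (Fin s × Fin 2)) :=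
  SimpleGraph.fromRel (fun x y =>
    x = none ∨ ∃ i : Fin s, x = some (i, 0) ∧ y = some (i, 1))

lemma path_case {V : Type*} (G : SimpleGraph V) (v a b c d : V) (M : Set (Sym2 V))
    (hM : G.IsPerfectMatchingOn M {v}ᶜ)
    (h1 : G.Adj v a) (h2 : G.Adj a b) (h3 : G.Adj b c) (h4 : G.Adj c d)
    (e2 : s(a,b) ∈ M) (e4 : s(c,d) ∈ M)
    (hvb : v ≠ b) (hvc : v ≠ c) (hvd : v ≠ d)
    (hac : a ≠ c) (had : a ≠ d) (hbd : b ≠ d) :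
    ∃ (w : V) (p : G.Walk v w), p.IsPath ∧ Odd p.support.length ∧ 5 ≤ p.support.length ∧
      (∀ (j : ℕ) (h : j < p.edges.length), Odd j → p.edges.get ⟨j, h⟩ ∈ M) ∧
      G.IsPerfectMatchingOn (M \ {e | e ∈ p.edges}) {x | x ∉ p.support} := by
  classical
  obtain ⟨hM1, hM2, hM3⟩ := hM
  refine ⟨d, Walk.cons h1 (Walk.cons h2 (Walk.cons h3 (Walk.cons h4 Walk.nil))), ?_, ?_, ?_, ?_, ?_⟩
  · rw [Walk.isPath_def]
    simp [h1.ne, h2.ne, h3.ne, h4.ne, hvb, hvc, hvd, hac, had, hbd]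
  · exact ⟨2, rfl⟩
  · show 5 ≤ ([v,a,b,c,d].length)
    simp
  · intro j h hodd
    rw [Nat.odd_iff] at hodd
    have hlen : j < 4 := h
    have hj : j = 1 ∨ j = 3 := by omega
    rcases hj with rfl | rfl
    · exact e2
    · exact e4
  · have uniqx : ∀ x : V, x ≠ v → ∀ e ∈ M, x ∈ e → ∀ e' ∈ M, x ∈ e' → e = e' := by
      intro x hx e he hxe e' he' hxe'
      obtain ⟨e'', -, hun⟩ := hM3 x (by simpa using hx)
      exact (hun e ⟨he, hxe⟩).trans (hun e' ⟨he', hxe'⟩).symm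
    have hane : a ≠ v := h1.ne'
    have hbne : b ≠ v := fun h => hvb h.symm
    have hcne : c ≠ v := fun h => hvc h.symm
    have hdne : d ≠ v := fun h => hvd h.symm
    refine ⟨fun e he => hM1 he.1, ?_, ?_⟩
    · intro e he x hx
      have hxv : x ≠ v := by simpa using hM2 e he.1 x hx
      show x ∉ _
      intro hsupp
      have hx5 : x = v ∨ x = a ∨ x = b ∨ x = c ∨ x = d := by
        simpa using hsupp
      have hnot : e ∉ ({e | e ∈ (Walk.cons h1 (Walk.cons h2 (Walk.cons h3 (Walk.cons h4 (Walk.nil : G.Walk d d))))).edges} : Set (Sym2 V)) := he.2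
      rcases hx5 with h | h | h | h | h
      · exact hxv h
      · have := uniqx x hxv e he.1 hx s(a,b) e2 (by rw [h]; exact Sym2.mem_mk_left a b)
        exact hnot (by rw [this]; simp)
      · have := uniqx x hxv e he.1 hx s(a,b) e2 (by rw [h]; exact Sym2.mem_mk_right a b)
        exact hnot (by rw [this]; simp)
      · have := uniqx x hxv e he.1 hx s(c,d) e4 (by rw [h]; exact Sym2.mem_mk_left c d)
        exact hnot (by rw [this]; simp)
      · have := uniqx x hxv e he.1 hx s(c,d) e4 (by rw [h]; exact Sym2.mem_mk_right c d)
        exact hnot (by rw [this]; simp)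
    · intro x hx
      have hxsupp : x ∉ ([v,a,b,c,d] : List V) := hx
      have hxv : x ≠ v := by intro h; exact hxsupp (by simp [h])
      obtain ⟨e, ⟨heM, hxe⟩, hun⟩ := hM3 x (by simpa using hxv)
      refine ⟨e, ⟨⟨heM, ?_⟩, hxe⟩, ?_⟩
      · intro hmem
        have he4 : e = s(v,a) ∨ e = s(a,b) ∨ e = s(b,c) ∨ e = s(c,d) := by
          simpa using hmem
        rcases he4 with rfl | rfl | rfl | rfl <;>
          (rcases Sym2.mem_iff.mp hxe with rfl | rfl <;> exact hxsupp (by simp))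
      · rintro e' ⟨⟨he'M, -⟩, hxe'⟩
        exact hun e' ⟨he'M, hxe'⟩

lemma iso_case {V : Type*} [Fintype V] (G : SimpleGraph V) (v : V) (P : V → V)
    (hPne : ∀ u, u ≠ v → P u ≠ v) (hPfix : ∀ u, u ≠ v → P u ≠ u)
    (hPinv : ∀ u, u ≠ v → P (P u) = u)
    (hadj : ∀ x y, G.Adj x y ↔ x ≠ y ∧ (x = v ∨ y = v ∨ (x ≠ v ∧ y = P x)))
    (hcard : 5 ≤ Fintype.card V) :
    ∃ s : ℕ, 2 ≤ s ∧ ∃ φ : G ≃g K1sK2 s, φ v = none := by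
  classical
  set f := Fintype.equivFin V with hf
  let s := Fintype.card {u : V // u ≠ v ∧ f u < f (P u)}
  let eR : {u : V // u ≠ v ∧ f u < f (P u)} ≃ Fin s := Fintype.equivFin _
  have hHigh : ∀ x, x ≠ v → ¬ (f x < f (P x)) → P x ≠ v ∧ f (P x) < f (P (P x)) := by
    intro x hx hlt
    refine ⟨hPne x hx, ?_⟩
    rw [hPinv x hx]
    rcases lt_trichotomy (f (P x)) (f x) with h | h | h
    · exact h
    · exact absurd (f.injective h) (hPfix x hx)
    · exact absurd h hlt
  let F : V → Option (Fin s × Fin 2) := fun x =>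
    if hx : x = v then none
    else if hlt : f x < f (P x) then some (eR ⟨x, hx, hlt⟩, 0)
    else some (eR ⟨P x, hHigh x hx hlt⟩, 1)
  let Finv : Option (Fin s × Fin 2) → V := fun o =>
    match o with
    | none => v
    | some (i, j) => if j = 0 then (eR.symm i : V) else P (eR.symm i)
  have hFv : F v = none := dif_pos rfl
  have hFlow : ∀ x (hx : x ≠ v) (hlt : f x < f (P x)), F x = some (eR ⟨x, hx, hlt⟩, 0) := by
    intro x hx hlt
    show (if hx : x = v then none
      else if hlt : f x < f (P x) then some (eR ⟨x, hx, hlt⟩, (0 : Fin 2))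
      else some (eR ⟨P x, hHigh x hx hlt⟩, 1)) = _
    rw [dif_neg hx, dif_pos hlt]
  have hFhigh : ∀ x (hx : x ≠ v) (hlt : ¬ f x < f (P x)),
      F x = some (eR ⟨P x, hHigh x hx hlt⟩, 1) := by
    intro x hx hlt
    show (if hx : x = v then none
      else if hlt : f x < f (P x) then some (eR ⟨x, hx, hlt⟩, (0 : Fin 2))
      else some (eR ⟨P x, hHigh x hx hlt⟩, 1)) = _
    rw [dif_neg hx, dif_neg hlt]
  have hFnone : ∀ x, F x = none ↔ x = v := by
    intro x
    constructor
    · intro h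
      by_contra hx
      by_cases hlt : f x < f (P x)
      · rw [hFlow x hx hlt] at h; exact Option.some_ne_none _ h
      · rw [hFhigh x hx hlt] at h; exact Option.some_ne_none _ h
    · rintro rfl; exact hFv
  have hleft : ∀ x, Finv (F x) = x := by
    intro x
    by_cases hx : x = v
    · subst hx; rw [hFv]
    · by_cases hlt : f x < f (P x)
      · rw [hFlow x hx hlt]
        show (if (0 : Fin 2) = 0 then _ else _) = x
        rw [if_pos rfl, eR.symm_apply_apply]
      · rw [hFhigh x hx hlt]
        show (if (1 : Fin 2) = 0 then _ else _) = x
        rw [if_neg (by decide : (1 : Fin 2) ≠ 0), eR.symm_apply_apply]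
        exact hPinv x hx
  have hright : ∀ o, F (Finv o) = o := by
    rintro (_ | ⟨i, j⟩)
    · exact hFv
    · have hr1 : (eR.symm i : V) ≠ v := (eR.symm i).2.1
      have hr2 : f (eR.symm i : V) < f (P (eR.symm i : V)) := (eR.symm i).2.2
      fin_cases j
      · show F (if (0 : Fin 2) = 0 then _ else _) = _
        rw [if_pos rfl, hFlow _ hr1 hr2]
        rw [Subtype.coe_eta, eR.apply_symm_apply]
        rfl
      · show F (if (1 : Fin 2) = 0 then _ else _) = _
        rw [if_neg (by decide : (1 : Fin 2) ≠ 0)]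
        have hx : P (eR.symm i : V) ≠ v := hPne _ hr1
        have hlt : ¬ f (P (eR.symm i : V)) < f (P (P (eR.symm i : V))) := by
          rw [hPinv _ hr1]
          exact fun h => absurd hr2 (not_lt.mpr h.le)
        rw [hFhigh _ hx hlt]
        have : (⟨P (P (eR.symm i : V)), hHigh _ hx hlt⟩ :
            {u : V // u ≠ v ∧ f u < f (P u)}) = eR.symm i :=
          Subtype.ext (hPinv _ hr1)
        rw [this, eR.apply_symm_apply]
        rfl
  let φe : V ≃ Option (Fin s × Fin 2) := ⟨F, Finv, hleft, hright⟩
  have hcards : Fintype.card V = 2 * s + 1 := by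
    rw [Fintype.card_congr φe, Fintype.card_option, Fintype.card_prod,
      Fintype.card_fin, Fintype.card_fin]
    ring
  have hs : 2 ≤ s := by omega
  have hsne : ((0 : Fin 2) = 1) = False := by simp
  have hmap : ∀ x y : V, (K1sK2 s).Adj (F x) (F y) ↔ G.Adj x y := by
    intro x y
    rw [hadj, K1sK2, SimpleGraph.fromRel_adj]
    by_cases hx : x = v
    · rw [(hFnone x).mpr hx, hx]
      constructor
      · rintro ⟨hne, -⟩
        have hy : y ≠ v := fun h => hne ((hFnone y).mpr h).symm
        exact ⟨fun h => hy h.symm, Or.inl rfl⟩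
      · rintro ⟨hne, -⟩
        exact ⟨fun h => hne ((hFnone y).mp h.symm).symm, Or.inl (Or.inl rfl)⟩
    · by_cases hy : y = v
      · rw [(hFnone y).mpr hy, hy]
        constructor
        · rintro ⟨hne, -⟩
          exact ⟨hx, Or.inr (Or.inl rfl)⟩
        · rintro ⟨hne, -⟩
          exact ⟨fun h => hx ((hFnone x).mp h), Or.inr (Or.inl rfl)⟩
      · have hRHS : (x ≠ y ∧ (x = v ∨ y = v ∨ (x ≠ v ∧ y = P x))) ↔ y = P x := by
          constructor
          · rintro ⟨hne, (h | h | ⟨-, h⟩)⟩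
            · exact absurd h hx
            · exact absurd h hy
            · exact h
          · rintro rfl
            exact ⟨fun h => hPfix x hx h.symm, Or.inr (Or.inr ⟨hx, rfl⟩)⟩
        rw [hRHS]
        by_cases hlx : f x < f (P x) <;> by_cases hly : f y < f (P y)
        · rw [hFlow x hx hlx, hFlow y hy hly]
          constructor
          · rintro ⟨-, (h | ⟨i, h1, h2⟩) | (h | ⟨i, h1, h2⟩)⟩
            · exact absurd h (Option.some_ne_none _)
            · simp only [Option.some.injEq, Prod.mk.injEq] at h2
              exact absurd h2.2 (by decide)
            · exact absurd h (Option.some_ne_none _)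
            · simp only [Option.some.injEq, Prod.mk.injEq] at h2
              exact absurd h2.2 (by decide)
          · intro h
            exfalso
            rw [h, hPinv x hx] at hly
            exact absurd hlx (not_lt.mpr hly.le)
        · rw [hFlow x hx hlx, hFhigh y hy hly]
          constructor
          · rintro ⟨-, (h | ⟨i, h1, h2⟩) | (h | ⟨i, h1, h2⟩)⟩
            · exact absurd h (Option.some_ne_none _)
            · simp only [Option.some.injEq, Prod.mk.injEq] at h1 h2
              have hxy : x = P y := congrArg Subtype.val
                (eR.injective (h1.1.trans h2.1.symm))
              have := congrArg P hxy
              rw [hPinv y hy] at this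
              exact this.symm
            · exact absurd h (Option.some_ne_none _)
            · simp only [Option.some.injEq, Prod.mk.injEq] at h1
              exact absurd h1.2 (by decide)
          · rintro rfl
            refine ⟨?_, Or.inl (Or.inr ⟨eR ⟨x, hx, hlx⟩, rfl, ?_⟩)⟩
            · intro h
              simp only [Option.some.injEq, Prod.mk.injEq] at h
              exact absurd h.2 (by decide)
            · have hsub : (⟨P (P x), hHigh (P x) hy hly⟩ :
                  {u : V // u ≠ v ∧ f u < f (P u)}) = ⟨x, hx, hlx⟩ :=
                Subtype.ext (hPinv x hx)
              rw [hsub]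
        · rw [hFhigh x hx hlx, hFlow y hy hly]
          constructor
          · rintro ⟨-, (h | ⟨i, h1, h2⟩) | (h | ⟨i, h1, h2⟩)⟩
            · exact absurd h (Option.some_ne_none _)
            · simp only [Option.some.injEq, Prod.mk.injEq] at h1
              exact absurd h1.2 (by decide)
            · exact absurd h (Option.some_ne_none _)
            · simp only [Option.some.injEq, Prod.mk.injEq] at h1 h2
              exact (congrArg Subtype.val (eR.injective (h2.1.trans h1.1.symm))).symm
          · rintro rfl
            exact ⟨fun h => by
                simp only [Option.some.injEq, Prod.mk.injEq] at h
                exact absurd h.2 (by decide),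
              Or.inr (Or.inr ⟨eR ⟨P x, hy, hly⟩, rfl, rfl⟩)⟩
        · rw [hFhigh x hx hlx, hFhigh y hy hly]
          constructor
          · rintro ⟨-, (h | ⟨i, h1, h2⟩) | (h | ⟨i, h1, h2⟩)⟩
            · exact absurd h (Option.some_ne_none _)
            · simp only [Option.some.injEq, Prod.mk.injEq] at h1
              exact absurd h1.2 (by decide)
            · exact absurd h (Option.some_ne_none _)
            · simp only [Option.some.injEq, Prod.mk.injEq] at h1
              exact absurd h1.2 (by decide)
          · rintro rfl
            exact absurd (hHigh x hx hlx).2 hly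
  exact ⟨s, hs, ⟨⟨φe, fun {a b} => hmap a b⟩, hFv⟩⟩

/-- Lemma 4.10: let `G` be hypomatchable with `|V(G)| ≥ 5`, let `M` be a perfect matching
of `G − v`, and suppose that whenever `G ≅ K₁ + sK₂` (`s ≥ 2`), the vertex `v` is not the
unique cutvertex.  Then `G` contains an alternating path `Q` of odd order at least `5`
starting at `v` such that `M − E(Q)` is a perfect matching of `G − V(Q)`. -/
theorem long_alternating_path {V : Type*} [Fintype V] (G : SimpleGraph V)
    (hG : G.Hypomatchable) (hcard : 5 ≤ Fintype.card V) (v : V) (M : Set (Sym2 V))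
    (hM : G.IsPerfectMatchingOn M {v}ᶜ)
    (hcut : ∀ s : ℕ, 2 ≤ s → ∀ φ : G ≃g K1sK2 s, φ v ≠ none) :
    ∃ (w : V) (p : G.Walk v w), p.IsPath ∧ Odd p.support.length ∧ 5 ≤ p.support.length ∧
      (∀ (j : ℕ) (h : j < p.edges.length), Odd j → p.edges.get ⟨j, h⟩ ∈ M) ∧
      G.IsPerfectMatchingOn (M \ {e | e ∈ p.edges}) {x | x ∉ p.support} := by
  classical
  obtain ⟨hM1, hM2, hM3⟩ := hM
  have hmemc : ∀ x : V, x ≠ v → x ∈ ({v}ᶜ : Set V) := fun x hx => by simpa using hx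
  have key : ∀ u, u ≠ v → ∃ w, G.Adj u w ∧ s(u,w) ∈ M ∧ w ≠ v := by
    intro u hu
    obtain ⟨e, ⟨heM, hue⟩, -⟩ := hM3 u (hmemc u hu)
    obtain ⟨w, rfl⟩ := Sym2.mem_iff_exists.mp hue
    exact ⟨w, G.mem_edgeSet.mp (hM1 heM), heM,
      by simpa using hM2 _ heM w (Sym2.mem_mk_right _ _)⟩
  let P : V → V := fun u => dite (u ≠ v) (fun hu => (key u hu).choose) (fun _ => v)
  have hP : ∀ u (hu : u ≠ v), P u = (key u hu).choose := fun u hu => dif_pos hu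
  have hPadj : ∀ u, u ≠ v → G.Adj u (P u) := by
    intro u hu; rw [hP u hu]; exact (key u hu).choose_spec.1
  have hPmem : ∀ u, u ≠ v → s(u, P u) ∈ M := by
    intro u hu; rw [hP u hu]; exact (key u hu).choose_spec.2.1
  have hPne : ∀ u, u ≠ v → P u ≠ v := by
    intro u hu; rw [hP u hu]; exact (key u hu).choose_spec.2.2
  have hPfix : ∀ u, u ≠ v → P u ≠ u := fun u hu => (hPadj u hu).ne'
  have uniq : ∀ u, u ≠ v → ∀ w w', s(u,w) ∈ M → s(u,w') ∈ M → w = w' := by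
    intro u hu w w' h h'
    obtain ⟨e, -, hune⟩ := hM3 u (hmemc u hu)
    have h1 := hune _ ⟨h, Sym2.mem_mk_left _ _⟩
    have h2 := hune _ ⟨h', Sym2.mem_mk_left _ _⟩
    rcases Sym2.eq_iff.mp (h1.trans h2.symm) with ⟨-, h⟩ | ⟨h1', h2'⟩
    · exact h
    · exact h2'.trans h1'
  have hPinv : ∀ u, u ≠ v → P (P u) = u := by
    intro u hu
    have h1 : s(P u, u) ∈ M := by
      have := hPmem u hu; rwa [Sym2.eq_swap] at this
    exact uniq (P u) (hPne u hu) (P (P u)) u (hPmem _ (hPne u hu)) h1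
  by_cases hpos : ∃ a b : V, G.Adj v a ∧ G.Adj (P a) b ∧ b ≠ v ∧ b ≠ a
  · obtain ⟨a, b, h1, h3, hbv, hba⟩ := hpos
    have hav : a ≠ v := h1.ne'
    refine path_case G v a (P a) b (P b) M ⟨hM1, hM2, hM3⟩ h1 (hPadj a hav) h3
      (hPadj b hbv) (hPmem a hav) (hPmem b hbv)
      (hPne a hav).symm hbv.symm (hPne b hbv).symm hba.symm ?_ ?_
    · intro h
      exact h3.ne (by rw [h, hPinv b hbv])
    · intro h
      have := congrArg P h
      rw [hPinv a hav, hPinv b hbv] at this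
      exact hba this.symm
  · push_neg at hpos
    have keyG : ∀ (u x : V), x ≠ u → ∃ w, w ≠ u ∧ G.Adj x w := by
      intro u x hxu
      obtain ⟨Mu, hMu1, hMu2, hMu3⟩ := hG u
      obtain ⟨e, ⟨heM, hxe⟩, -⟩ := hMu3 x (by simpa using hxu)
      obtain ⟨w, rfl⟩ := Sym2.mem_iff_exists.mp hxe
      exact ⟨w, by simpa using hMu2 _ heM w (Sym2.mem_mk_right _ _),
        G.mem_edgeSet.mp (hMu1 heM)⟩
    have step2 : ∀ a, G.Adj v a → G.Adj v (P a) := by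
      intro a ha
      by_contra hc
      have hav : a ≠ v := ha.ne'
      obtain ⟨w, hwa, hw⟩ := keyG a (P a) (hPfix a hav)
      rcases ne_or_eq w v with hwv | rfl
      · exact hwa (hpos a w ha hw hwv)
      · exact hc hw.symm
    have step3 : ∀ u, G.Adj v u → ∀ w, G.Adj u w → w = v ∨ w = P u := by
      intro u hu w hw
      have huv : u ≠ v := hu.ne'
      by_cases hwv : w = v
      · exact Or.inl hwv
      · exact Or.inr (hpos (P u) w (step2 u hu) (by rwa [hPinv u huv]) hwv)
    have hvadj : ∀ w, w ≠ v → G.Adj v w := by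
      intro w hwv
      by_contra hnadj
      obtain ⟨Mw, hW1, hW2, hW3⟩ := hG w
      have hvw : v ≠ w := fun h => hwv h.symm
      obtain ⟨e, ⟨heM, hve⟩, hequn⟩ := hW3 v (by simpa using hvw)
      obtain ⟨aa, rfl⟩ := Sym2.mem_iff_exists.mp hve
      have hva : G.Adj v aa := G.mem_edgeSet.mp (hW1 heM)
      have haw : aa ≠ w := by simpa using hW2 _ heM aa (Sym2.mem_mk_right _ _)
      have hav : aa ≠ v := hva.ne'
      have hva' : G.Adj v (P aa) := step2 aa hva
      have ha'w : P aa ≠ w := fun h => hnadj (h ▸ hva')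
      have ha'v : P aa ≠ v := hva'.ne'
      obtain ⟨e', ⟨he'M, ha'e⟩, -⟩ := hW3 (P aa) (by simpa using ha'w)
      obtain ⟨bb, rfl⟩ := Sym2.mem_iff_exists.mp ha'e
      have ha'b : G.Adj (P aa) bb := G.mem_edgeSet.mp (hW1 he'M)
      rcases step3 (P aa) hva' bb ha'b with hb | hb
      · -- bb = v
        have hmm : (v : V) ∈ s(P aa, bb) := by rw [hb]; exact Sym2.mem_mk_right _ _
        have := hequn _ ⟨he'M, hmm⟩
        rcases Sym2.eq_iff.mp this with ⟨h1, h2⟩ | ⟨h1, h2⟩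
        · exact ha'v h1
        · exact hPfix aa hav h1
      · -- bb = P (P aa) = aa
        rw [hPinv aa hav] at hb
        obtain ⟨e'', -, haun⟩ := hW3 aa (by simpa using haw)
        have hmm : (aa : V) ∈ s(P aa, bb) := by rw [hb]; exact Sym2.mem_mk_right _ _
        have h1 := haun _ ⟨he'M, hmm⟩
        have h2 := haun _ ⟨heM, Sym2.mem_mk_right _ _⟩
        rcases Sym2.eq_iff.mp (h1.trans h2.symm) with ⟨h1', h2'⟩ | ⟨h1', h2'⟩
        · exact ha'v h1'
        · exact hPfix aa hav h1'
    have hadjiff : ∀ x y, G.Adj x y ↔ x ≠ y ∧ (x = v ∨ y = v ∨ (x ≠ v ∧ y = P x)) := by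
      intro x y
      constructor
      · intro h
        refine ⟨h.ne, ?_⟩
        by_cases hx : x = v
        · exact Or.inl hx
        · by_cases hy : y = v
          · exact Or.inr (Or.inl hy)
          · rcases step3 x (hvadj x hx) y h with h' | h'
            · exact absurd h' hy
            · exact Or.inr (Or.inr ⟨hx, h'⟩)
      · rintro ⟨hne, h | h | ⟨hx, rfl⟩⟩
        · rw [h]; exact hvadj y (fun hy => hne (h.trans hy.symm))
        · rw [h]; exact (hvadj x (fun hx => hne (hx.trans h.symm))).symm
        · exact hPadj x hx
    obtain ⟨s, hs, φ, hφ⟩ := iso_case G v P hPne hPfix hPinv hadjiff hcard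
    exact absurd hφ (hcut s hs φ)
end
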